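/- arXiv:0801.4808 — 9 statements merged into one kernel-verified Lean document; each statement's English description precedes it below -/
import Mathlib

section
/- Let g be a finite-dimensional complex simple Lie algebra and let f be a saturated Frobenius Lie subalgebra of g, i.e. f is not a proper ideal of any larger Lie subalgebra of g. If F is a Frobenius functional on f with principal element F̂ ∈ f, then F̂ is a semisimple element of g, i.e. the adjoint endomorphism ad F̂ : g → g is diagonalizable. -/
open LieModule LieAlgebra Module

section Auxiliary

variable {g : Type*} [LieRing g] [LieAlgebra ℂ g] [FiniteDimensional ℂ g]

/-- If the Killing form of `g` vanishes identically, then every weight of a Cartan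
subalgebra vanishes on the coroot space of every nonzero potential root. -/
lemma weight_apply_eq_zero_of_killingForm_eq_zero
    (hkill : ∀ x y : g, killingForm ℂ g x y = 0)
    {H : LieSubalgebra ℂ g} [H.IsCartanSubalgebra]
    {β : H → ℂ} (hβ : β ≠ 0)
    (χ : Weight ℂ H g) {x : H} (hx : x ∈ corootSpace β) :
    χ x = 0 := by
  by_cases hgβ : genWeightSpace g β = ⊥
  · -- then the coroot space is trivial
    have : (x : g) = 0 := by
      rw [mem_corootSpace] at hx
      have hset : {z | ∃ y ∈ rootSpace H β, ∃ w ∈ rootSpace H (-β), ⁅y, w⁆ = z} ⊆ {(0 : g)} := by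
        rintro - ⟨y, hy, w, hw, rfl⟩
        have : y = 0 := by
          simpa [hgβ] using hy
        simp [this]
      have := Submodule.span_mono (R := ℂ) hset hx
      simpa using this
    have hx0 : x = 0 := Subtype.ext this
    simp [hx0]
  · -- choose the integral relations for every weight
    have hrel : ∀ ψ : Weight ℂ H g, ∃ a b : ℤ, 0 < b ∧
        ∀ y ∈ corootSpace β, (a • β + b • (ψ : H → ℂ)) y = 0 := fun ψ =>
      exists_forall_mem_corootSpace_smul_add_eq_zero g β ψ hβ ψ.genWeightSpace_ne_bot
    choose a b hb hab using hrel
    -- each weight is a rational multiple of β on x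
    set q : Weight ℂ H g → ℚ := fun ψ => (-(a ψ) : ℚ) / (b ψ) with hq
    have hψx : ∀ ψ : Weight ℂ H g, (ψ : H → ℂ) x = (q ψ : ℂ) * β x := by
      intro ψ
      have h1 := hab ψ x hx
      have hb0 : ((b ψ : ℂ)) ≠ 0 := by
        exact_mod_cast (hb ψ).ne'
      rw [Pi.add_apply, Pi.smul_apply, Pi.smul_apply, zsmul_eq_mul, zsmul_eq_mul] at h1
      have : (ψ : H → ℂ) x = (-(a ψ) : ℂ) / (b ψ) * β x := by
        rw [div_mul_eq_mul_div, eq_div_iff hb0]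
        linear_combination h1
      rw [this, hq]
      push_cast
      ring
    -- key : β x = 0
    have hβx : β x = 0 := by
      by_contra ht
      -- trace form identity
      have htr : (0 : ℂ) = ∑ ψ : Weight ℂ H g,
          finrank ℂ (genWeightSpace g (ψ : H → ℂ)) • ((ψ : H → ℂ) x * (ψ : H → ℂ) x) := by
        rw [← traceForm_eq_sum_finrank_nsmul_mul ℂ H g x x]
        have : traceForm ℂ H g x x = killingForm ℂ g (x : g) (x : g) := rfl
        rw [this, hkill]
      set r : ℚ := ∑ ψ : Weight ℂ H g,
          (finrank ℂ (genWeightSpace g (ψ : H → ℂ)) : ℚ) * (q ψ) ^ 2 with hr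
      have hrc : ((r : ℂ)) * (β x) ^ 2 = 0 := by
        rw [hr]
        push_cast
        rw [Finset.sum_mul]
        rw [htr]
        refine Finset.sum_congr rfl fun ψ _ => ?_
        rw [hψx ψ]
        push_cast
        ring
      have hr0 : r = 0 := by
        have h2 : (β x) ^ 2 ≠ 0 := pow_ne_zero _ ht
        have := mul_eq_zero.mp hrc
        rcases this with h | h
        · exact_mod_cast h
        · exact absurd h h2
      -- but the term at β itself is positive
      set ψ₀ : Weight ℂ H g := ⟨β, hgβ⟩ with hψ₀
      have hq₀ : q ψ₀ = 1 := by
        have h1 := hψx ψ₀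
        have h2 : (ψ₀ : H → ℂ) x = β x := rfl
        rw [h2] at h1
        have h3 : ((q ψ₀ : ℂ)) * β x = 1 * β x := by rw [one_mul]; exact h1.symm
        have : ((q ψ₀ : ℂ)) = 1 := mul_right_cancel₀ ht h3
        exact_mod_cast this
      have hpos : (0 : ℚ) < (finrank ℂ (genWeightSpace g (ψ₀ : H → ℂ)) : ℚ) * (q ψ₀) ^ 2 := by
        rw [hq₀]
        simp only [one_pow, mul_one]
        exact_mod_cast zero_lt_finrank_genWeightSpace hgβ
      have hnonneg : ∀ ψ : Weight ℂ H g, ψ ∈ Finset.univ → (0 : ℚ) ≤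
          (finrank ℂ (genWeightSpace g (ψ : H → ℂ)) : ℚ) * (q ψ) ^ 2 := fun ψ _ =>
        mul_nonneg (by positivity) (sq_nonneg _)
      have := Finset.sum_eq_zero_iff_of_nonneg hnonneg |>.mp hr0 ψ₀ (Finset.mem_univ _)
      exact absurd this (ne_of_gt hpos)
    rw [hψx χ, hβx, mul_zero]

/-- Cartan's criterion for the setting at hand: a finite-dimensional simple complex Lie
algebra has nondegenerate Killing form. -/
lemma isKilling_of_isSimple [LieAlgebra.IsSimple ℂ g] : LieAlgebra.IsKilling ℂ g := by
  constructor
  rcases LieAlgebra.IsSimple.eq_bot_or_eq_top (LieIdeal.killingCompl ℂ g ⊤) with h | h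
  · exact h
  exfalso
  have hnt : Nontrivial g := by
    by_contra hcon
    have : Subsingleton g := not_nontrivial_iff_subsingleton.mp hcon
    exact LieAlgebra.IsSimple.non_abelian (R := ℂ) (L := g)
      ⟨fun x y => Subsingleton.elim _ _⟩
  have hkill : ∀ x y : g, killingForm ℂ g x y = 0 := by
    intro x y
    have hy : y ∈ LieIdeal.killingCompl ℂ g ⊤ := by rw [h]; trivial
    exact (LieIdeal.mem_killingCompl ℂ g ⊤).mp hy x trivial
  obtain ⟨z, hz⟩ := LieAlgebra.exists_isCartanSubalgebra_engel ℂ g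
  set H : LieSubalgebra ℂ g := LieSubalgebra.engel ℂ z with hH
  clear_value H
  by_cases hex : ∃ α : Weight ℂ H g, (α : H → ℂ) ≠ 0
  · obtain ⟨α, hα⟩ := hex
    -- the candidate ideal
    set S : Set g := {w | ∃ χ : H → ℂ, ∃ u ∈ genWeightSpace g χ,
      ∃ v ∈ genWeightSpace g (-χ), ⁅u, v⁆ = w} with hS
    set W : Submodule ℂ g := Submodule.span ℂ S with hWdef
    set R1 : LieSubmodule ℂ H g :=
      ⨆ χ : {χ : H → ℂ // χ ≠ 0}, genWeightSpace g (χ : H → ℂ) with hR1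
    set Ksub : Submodule ℂ g := (R1 : Submodule ℂ g) ⊔ W with hK
    -- generators of S lie in H
    have hSH : ∀ w ∈ S, w ∈ H.toSubmodule := by
      rintro w ⟨χ, u, hu, v, hv, rfl⟩
      have h0 : ⁅u, v⁆ ∈ genWeightSpace g (χ + (-χ)) :=
        mapsTo_toEnd_genWeightSpace_add_of_mem_rootSpace ℂ g H g χ (-χ) hu hv
      rw [add_neg_cancel] at h0
      have h1 : ⁅u, v⁆ ∈ rootSpace H 0 := h0
      rw [rootSpace_zero_eq] at h1
      exact h1
    have hWH : W ≤ H.toSubmodule := Submodule.span_le.mpr hSH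
    -- key bracket stability
    have key : ∀ (γ : H → ℂ), ∀ x ∈ genWeightSpace g γ, ∀ m ∈ Ksub, ⁅x, m⁆ ∈ Ksub := by
      intro γ x hx m hm
      have hR : ∀ r ∈ R1, ⁅x, r⁆ ∈ Ksub := by
        intro r hr
        induction hr using LieSubmodule.iSup_induction' with
        | mem χ r hr =>
          have hbr : ⁅x, r⁆ ∈ genWeightSpace g (γ + (χ : H → ℂ)) :=
            mapsTo_toEnd_genWeightSpace_add_of_mem_rootSpace ℂ g H g γ (χ : H → ℂ) hx hr
          by_cases h0 : γ + (χ : H → ℂ) = 0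
          · have hrneg : r ∈ genWeightSpace g (-γ) := by
              have : (χ : H → ℂ) = -γ := eq_neg_of_add_eq_zero_right h0
              rwa [this] at hr
            have : ⁅x, r⁆ ∈ S := ⟨γ, x, hx, r, hrneg, rfl⟩
            exact le_sup_right (a := (R1 : Submodule ℂ g)) (Submodule.subset_span this)
          · have hle : genWeightSpace g (γ + (χ : H → ℂ)) ≤ R1 :=
              le_iSup (fun χ : {χ : H → ℂ // χ ≠ 0} => genWeightSpace g (χ : H → ℂ))
                ⟨γ + (χ : H → ℂ), h0⟩
            exact le_sup_left (b := W) (hle hbr)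
        | zero => simp only [lie_zero]; exact Ksub.zero_mem
        | add r s _ _ hr hs => rw [lie_add]; exact Ksub.add_mem hr hs
      have hWc : ∀ w ∈ W, ⁅x, w⁆ ∈ Ksub := by
        intro w hw
        induction hw using Submodule.span_induction with
        | mem w hwS =>
          obtain ⟨δ, u, hu, v, hv, rfl⟩ := hwS
          have hw0 : ⁅u, v⁆ ∈ genWeightSpace g (0 : H → ℂ) := by
            have := mapsTo_toEnd_genWeightSpace_add_of_mem_rootSpace ℂ g H g δ (-δ) hu hv
            rwa [add_neg_cancel] at this
          by_cases hγ : γ = 0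
          · subst hγ
            have hxu : ⁅x, u⁆ ∈ genWeightSpace g δ := by
              have := mapsTo_toEnd_genWeightSpace_add_of_mem_rootSpace
                ℂ g H g (0 : H → ℂ) δ hx hu
              rwa [zero_add] at this
            have hxv : ⁅x, v⁆ ∈ genWeightSpace g (-δ) := by
              have := mapsTo_toEnd_genWeightSpace_add_of_mem_rootSpace
                ℂ g H g (0 : H → ℂ) (-δ) hx hv
              rwa [zero_add] at this
            have hleib : ⁅x, ⁅u, v⁆⁆ = ⁅⁅x, u⁆, v⁆ + ⁅u, ⁅x, v⁆⁆ := leibniz_lie x u v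
            rw [hleib]
            refine Ksub.add_mem ?_ ?_
            · exact le_sup_right (a := (R1 : Submodule ℂ g))
                (Submodule.subset_span ⟨δ, ⁅x, u⁆, hxu, v, hv, rfl⟩)
            · exact le_sup_right (a := (R1 : Submodule ℂ g))
                (Submodule.subset_span ⟨δ, u, hu, ⁅x, v⁆, hxv, rfl⟩)
          · have hbr : ⁅x, ⁅u, v⁆⁆ ∈ genWeightSpace g γ := by
              have := mapsTo_toEnd_genWeightSpace_add_of_mem_rootSpace
                ℂ g H g γ (0 : H → ℂ) hx hw0
              rwa [add_zero] at this
            have hle : genWeightSpace g γ ≤ R1 :=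
              le_iSup (fun χ : {χ : H → ℂ // χ ≠ 0} => genWeightSpace g (χ : H → ℂ)) ⟨γ, hγ⟩
            exact le_sup_left (b := W) (hle hbr)
        | zero => simp only [lie_zero]; exact Ksub.zero_mem
        | add r s _ _ hr hs => rw [lie_add]; exact Ksub.add_mem hr hs
        | smul c r _ hr => rw [lie_smul]; exact Ksub.smul_mem c hr
      obtain ⟨r, hr, w, hw, rfl⟩ := Submodule.mem_sup.mp hm
      rw [lie_add]
      exact Ksub.add_mem (hR r hr) (hWc w hw)
    have hlie : ∀ (x m : g), m ∈ Ksub → ⁅x, m⁆ ∈ Ksub := by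
      intro x m hm
      have hx : x ∈ (⨆ χ : H → ℂ, genWeightSpace g χ) := by
        rw [iSup_genWeightSpace_eq_top ℂ H g]; trivial
      induction hx using LieSubmodule.iSup_induction' with
      | mem χ x hx => exact key χ x hx m hm
      | zero => rw [zero_lie]; exact Ksub.zero_mem
      | add y z _ _ hy hz => rw [add_lie]; exact Ksub.add_mem hy hz
    set K : LieIdeal ℂ g := { Ksub with lie_mem := fun {x m} hm => hlie x m hm } with hKdef
    have hKmem : ∀ m : g, m ∈ K ↔ m ∈ Ksub := fun m => Iff.rfl
    have hKne : K ≠ ⊥ := by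
      intro hbot
      have hne := α.genWeightSpace_ne_bot
      rw [Ne, LieSubmodule.eq_bot_iff] at hne
      push_neg at hne
      obtain ⟨y, hy, hy0⟩ := hne
      have hyK : y ∈ K := by
        rw [hKmem]
        refine le_sup_left (b := W) ?_
        exact (le_iSup (fun χ : {χ : H → ℂ // χ ≠ 0} => genWeightSpace g (χ : H → ℂ))
          ⟨(α : H → ℂ), hα⟩ : _ ≤ R1) hy
      rw [hbot] at hyK
      exact hy0 (by simpa using hyK)
    have hKtop : K = ⊤ := (LieAlgebra.IsSimple.eq_bot_or_eq_top K).resolve_left hKne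
    -- every element of H lies in W
    have hHW : ∀ h : H, (h : g) ∈ W := by
      intro h
      have hhK : (h : g) ∈ Ksub := by
        have : (h : g) ∈ K := by rw [hKtop]; trivial
        rwa [hKmem] at this
      obtain ⟨r, hr, w, hw, hsum⟩ := Submodule.mem_sup.mp hhK
      have hrH : r ∈ H.toSubmodule := by
        have hwH : w ∈ H.toSubmodule := hWH hw
        rw [eq_sub_of_add_eq hsum]
        exact sub_mem h.2 hwH
      have hdisj : Disjoint (rootSpace H 0) R1 := by
        have h0 := (iSupIndep_genWeightSpace ℂ H g) (0 : H → ℂ)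
        refine h0.mono_right ?_
        refine iSup_le fun i => ?_
        exact le_iSup₂ (f := fun (j : H → ℂ) (_ : j ≠ 0) => genWeightSpace g j) i.1 i.2
      rw [rootSpace_zero_eq] at hdisj
      have hr0 : r = 0 := by
        have h1 : r ∈ H.toLieSubmodule ⊓ R1 := by
          constructor
          · exact hrH
          · exact hr
        rw [disjoint_iff] at hdisj
        rw [hdisj] at h1
        simpa using h1
      rw [← hsum, hr0, zero_add]
      exact hw
    -- every weight vanishes on H
    have hvan : ∀ (χ : Weight ℂ H g) (h : H), χ h = 0 := by
      intro χ h
      set T : Submodule ℂ g :=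
        (LinearMap.ker (χ : H →ₗ[ℂ] ℂ)).map H.toSubmodule.subtype with hT
      have hST : S ⊆ T := by
        rintro w ⟨δ, u, hu, v, hv, rfl⟩
        have hwH : ⁅u, v⁆ ∈ H.toSubmodule := hSH _ ⟨δ, u, hu, v, hv, rfl⟩
        refine ⟨⟨⁅u, v⁆, hwH⟩, LinearMap.mem_ker.mpr ?_, rfl⟩
        have hcoeχ : ∀ y : H, (χ : H →ₗ[ℂ] ℂ) y = χ y := fun y => rfl
        rw [hcoeχ]
        by_cases hδ : δ = 0
        · subst hδ
          have huH : u ∈ H.toSubmodule := by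
            have h1 : u ∈ rootSpace H 0 := hu
            rwa [rootSpace_zero_eq] at h1
          have hvH : v ∈ H.toSubmodule := by
            have h1 : v ∈ rootSpace H 0 := by rw [← neg_zero]; exact hv
            rwa [rootSpace_zero_eq] at h1
          have : (⟨⁅u, v⁆, hwH⟩ : H) = ⁅(⟨u, huH⟩ : H), (⟨v, hvH⟩ : H)⁆ := by
            apply Subtype.ext
            rfl
          rw [this]
          exact Weight.apply_lie (χ := χ) ⟨u, huH⟩ ⟨v, hvH⟩
        · have hmem : (⟨⁅u, v⁆, hwH⟩ : H) ∈ corootSpace δ := by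
            rw [mem_corootSpace]
            exact Submodule.subset_span ⟨u, hu, v, hv, rfl⟩
          exact weight_apply_eq_zero_of_killingForm_eq_zero hkill hδ χ hmem
      have hWT : W ≤ T := Submodule.span_le.mpr hST
      obtain ⟨h', hker, hcoe⟩ := hWT (hHW h)
      have hh : h' = h := Subtype.ext hcoe
      rw [← hh]
      have := LinearMap.mem_ker.mp hker
      exact this
    refine hα ?_
    ext h
    exact hvan α h
  · -- no nonzero weight: g = H is nilpotent, contradiction with simplicity
    push_neg at hex
    have hsup : (⊤ : LieSubmodule ℂ H g) = genWeightSpace g (0 : H → ℂ) := by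
      rw [← iSup_genWeightSpace_eq_top ℂ H g]
      refine le_antisymm (iSup_le fun χ => ?_) (le_iSup _ (0 : H → ℂ))
      by_cases hbot : genWeightSpace g χ = ⊥
      · rw [hbot]; exact bot_le
      · have : χ = 0 := by
          have := hex ⟨χ, hbot⟩
          exact funext fun y => congrFun this y
        rw [this]
    have hHtop : H = ⊤ := by
      have h1 : H.toLieSubmodule = ⊤ := by
        rw [← rootSpace_zero_eq]
        exact hsup.symm
      rw [← LieSubalgebra.toSubmodule_inj]
      have := congrArg (fun N : LieSubmodule ℂ H g => (N : Submodule ℂ g)) h1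
      simpa using this
    have hnilH : LieRing.IsNilpotent H := inferInstance
    have hnilTop : LieRing.IsNilpotent (⊤ : LieSubalgebra ℂ g) := hHtop ▸ hnilH
    haveI hnil : LieRing.IsNilpotent g :=
      (LieEquiv.nilpotent_iff_equiv_nilpotent LieSubalgebra.topEquiv).mp hnilTop
    have hcenter : Nontrivial (LieAlgebra.center ℂ g) :=
      LieAlgebra.non_trivial_center_of_isNilpotent (R := ℂ) (L := g)
    have hcbot : LieAlgebra.center ℂ g = ⊥ := LieAlgebra.center_eq_bot ℂ g
    rw [hcbot] at hcenter
    obtain ⟨⟨a, ha⟩, ⟨b, hb⟩, hab⟩ := hcenter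
    apply hab
    apply Subtype.ext
    rw [LieSubmodule.mem_bot] at ha hb
    show a = b
    rw [ha, hb]

end Auxiliary

/-- **Semisimplicity of the principal element.**
Let `g` be a finite-dimensional complex simple Lie algebra and `f` a saturated Lie
subalgebra (not a proper ideal of any larger subalgebra of `g`).  If `F` is a
Frobenius functional on `f` with principal element `F̂`, then `F̂` is a semisimple
element of `g`: the adjoint endomorphism `ad F̂ : g → g` is diagonalizable. -/
theorem principal_element_isSemisimple
    (g : Type*) [LieRing g] [LieAlgebra ℂ g] [FiniteDimensional ℂ g]
    [LieAlgebra.IsSimple ℂ g]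
    (f : LieSubalgebra ℂ g)
    -- `f` is saturated: it is not a proper ideal of any larger subalgebra of `g`
    (hsat : ∀ k : LieSubalgebra ℂ g, f ≤ k →
      (∀ x ∈ k, ∀ y ∈ f, ⁅x, y⁆ ∈ f) → f = k)
    (F : Module.Dual ℂ f)
    -- `F` is a Frobenius functional on `f`
    (hF : ∀ x : f, (∀ y : f, F ⁅x, y⁆ = 0) → x = 0)
    (Fhat : f)
    -- `F̂` is the principal element associated to `F`
    (hFhat : ∀ x : f, F x = F ⁅Fhat, x⁆) :
    ⨆ μ : ℂ, Module.End.eigenspace (LieAlgebra.ad ℂ g (Fhat : g)) μ = ⊤ := by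
  haveI : LieAlgebra.IsKilling ℂ g := isKilling_of_isSimple
  set A : Module.End ℂ g := LieAlgebra.ad ℂ g (Fhat : g) with hA
  -- Jordan-Chevalley decomposition of `A`
  obtain ⟨N, hNmem, Sv, hSmem, hNnil, hSss, hsum⟩ := A.exists_isNilpotent_isSemisimple
  have hcomm : Commute A Sv := Algebra.commute_of_mem_adjoin_self hSmem
  have hNns : IsNilpotent (A - Sv) := by rwa [eq_sub_of_add_eq hsum.symm] at hNnil
  -- the semisimple part acts as a scalar on each generalized eigenspace of `A`
  have aux : ∀ (χ : ℂ) (y : g), y ∈ A.maxGenEigenspace χ → Sv y = χ • y := fun χ y hy =>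
    Module.End.apply_eq_of_mem_of_comm_of_isFinitelySemisimple_of_isNil hy hcomm
      hSss.isFinitelySemisimple hNns
  -- `Sv` is a derivation
  have hder : ∀ y z : g, Sv ⁅y, z⁆ = ⁅Sv y, z⁆ + ⁅y, Sv z⁆ := by
    have hgen : ∀ (χ₁ χ₂ : ℂ) (y z : g), y ∈ A.maxGenEigenspace χ₁ →
        z ∈ A.maxGenEigenspace χ₂ → Sv ⁅y, z⁆ = ⁅Sv y, z⁆ + ⁅y, Sv z⁆ := by
      intro χ₁ χ₂ y z hy hz
      have hyz : ⁅y, z⁆ ∈ A.maxGenEigenspace (χ₁ + χ₂) :=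
        lie_mem_maxGenEigenspace_toEnd (R := ℂ) (L := g) (M := g) hy hz
      rw [aux _ _ hy, aux _ _ hz, aux _ _ hyz, smul_lie, lie_smul, ← add_smul]
    intro y z
    have hy : y ∈ ⨆ χ : ℂ, A.maxGenEigenspace χ := by
      rw [Module.End.iSup_maxGenEigenspace_eq_top]; trivial
    have hz : z ∈ ⨆ χ : ℂ, A.maxGenEigenspace χ := by
      rw [Module.End.iSup_maxGenEigenspace_eq_top]; trivial
    induction hy using Submodule.iSup_induction' with
    | mem χ₁ y hy =>
      induction hz using Submodule.iSup_induction' with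
      | mem χ₂ z hz => exact hgen χ₁ χ₂ y z hy hz
      | zero => simp
      | add _ _ _ _ h h' => simp only [lie_add, map_add, h, h']; abel
    | zero => simp
    | add _ _ _ _ h h' => simp only [add_lie, map_add, h, h']; abel
  -- realize `Sv` as an inner derivation
  have hder' : ∀ y z : g, Sv ⁅y, z⁆ = ⁅y, Sv z⁆ - ⁅z, Sv y⁆ := by
    intro y z
    rw [hder y z, ← lie_skew (Sv y) z]
    abel
  let S' : LieDerivation ℂ g g := ⟨Sv, hder'⟩
  obtain ⟨s, hs⟩ := LieDerivation.IsKilling.exists_eq_ad S'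
  have hads : ∀ y : g, ⁅s, y⁆ = Sv y := by
    intro y
    have h1 : (LieDerivation.ad ℂ g s) y = S' y := by rw [hs]
    have h2 : (LieDerivation.ad ℂ g s) y = (LieAlgebra.ad ℂ g s) y := by
      simp
    rw [h2] at h1
    rw [LieAlgebra.ad_apply] at h1
    exact h1
  -- `Sv` preserves `f`
  have hSf : ∀ y ∈ f.toSubmodule, Sv y ∈ f.toSubmodule := by
    have hadj : ∀ B ∈ Algebra.adjoin ℂ {A}, ∀ y ∈ f.toSubmodule, B y ∈ f.toSubmodule := by
      intro B hB
      induction hB using Algebra.adjoin_induction with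
      | mem B hB =>
        rw [Set.mem_singleton_iff] at hB
        subst hB
        intro y hy
        exact f.lie_mem Fhat.2 hy
      | algebraMap r =>
        intro y hy
        simpa using f.toSubmodule.smul_mem r hy
      | add B C hB hC ihB ihC =>
        intro y hy
        simpa using f.toSubmodule.add_mem (ihB y hy) (ihC y hy)
      | mul B C hB hC ihB ihC =>
        intro y hy
        simpa using ihB _ (ihC y hy)
    exact hadj Sv hSmem
  -- `s` normalizes `f`, hence `s ∈ f` by saturation
  have hsf : s ∈ f := by
    have hsnorm : s ∈ f.normalizer := (f.mem_normalizer_iff s).mpr fun y hy => by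
      rw [hads]; exact hSf y hy
    have hfnorm : f = f.normalizer :=
      hsat f.normalizer f.le_normalizer fun x hx y hy => (f.mem_normalizer_iff x).mp hx y hy
    rw [hfnorm]
    exact hsnorm
  set sf : f := ⟨s, hsf⟩ with hsfdef
  set ns : f := Fhat - sf with hns
  set Af : Module.End ℂ f := LieAlgebra.ad ℂ f Fhat with hAf
  -- coercion compatibility
  have hstep : ∀ (χ : ℂ) (z : f), ((Af - χ • 1) z : g) = (A - χ • 1) (z : g) := by
    intro χ z
    have hco : (Af z : g) = A (z : g) := by
      rw [hA, hAf, LieAlgebra.ad_apply, LieAlgebra.ad_apply]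
      rfl
    simp only [LinearMap.sub_apply, LinearMap.smul_apply, Module.End.one_apply]
    show (Af z : g) - χ • (z : g) = A (z : g) - χ • (z : g)
    rw [hco]
  have hpow : ∀ (χ : ℂ) (k : ℕ) (z : f), (((Af - χ • 1) ^ k) z : g) = ((A - χ • 1) ^ k) (z : g) := by
    intro χ k
    induction k with
    | zero => intro z; simp
    | succ k ih =>
      intro z
      rw [pow_succ, pow_succ]
      simp only [Module.End.mul_apply]
      rw [ih ((Af - χ • 1) z), hstep]
  -- F ∘ Af = F
  have hFA : ∀ z : f, F (Af z) = F z := by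
    intro z
    rw [hAf, LieAlgebra.ad_apply, ← hFhat]
  -- main claim: F kills all brackets with ns
  have hkey : ∀ y : f, F ⁅ns, y⁆ = 0 := by
    have hgen : ∀ (χ : ℂ) (y : f), y ∈ Af.maxGenEigenspace χ → F ⁅ns, y⁆ = 0 := by
      intro χ y hy
      -- Sv acts as χ on ↑y
      have hyg : (y : g) ∈ A.maxGenEigenspace χ := by
        rw [Module.End.mem_maxGenEigenspace] at hy ⊢
        obtain ⟨k, hk⟩ := hy
        exact ⟨k, by rw [← hpow χ k y, hk]; simp⟩
      have hbr : ⁅sf, y⁆ = χ • y := by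
        apply Subtype.ext
        show ⁅s, (y : g)⁆ = χ • (y : g)
        rw [hads, aux χ _ hyg]
      have h2 : F ⁅ns, y⁆ = (1 - χ) * F y := by
        rw [hns, sub_lie, map_sub, hbr, map_smul]
        have h3 : F ⁅Fhat, y⁆ = F y := (hFhat y).symm
        rw [h3]
        simp [smul_eq_mul]
        ring
      by_cases hχ : χ = 1
      · rw [h2, hχ]; ring
      · have hrec : ∀ z : f, F ((Af - χ • 1) z) = (1 - χ) * F z := by
          intro z
          simp only [LinearMap.sub_apply, LinearMap.smul_apply, Module.End.one_apply]
          rw [map_sub, map_smul, hFA]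
          simp [smul_eq_mul]
          ring
        have hit : ∀ (k : ℕ) (z : f), F (((Af - χ • 1) ^ k) z) = (1 - χ) ^ k * F z := by
          intro k
          induction k with
          | zero => intro z; simp
          | succ k ih =>
            intro z
            rw [pow_succ', pow_succ']
            simp only [Module.End.mul_apply]
            rw [hrec, ih z]
            ring
        have hFy : F y = 0 := by
          rw [Module.End.mem_maxGenEigenspace] at hy
          obtain ⟨k, hk⟩ := hy
          have hity := hit k y
          rw [hk, map_zero] at hity
          have hne : ((1 : ℂ) - χ) ^ k ≠ 0 := pow_ne_zero _ (sub_ne_zero.mpr (Ne.symm hχ))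
          exact (mul_eq_zero.mp hity.symm).resolve_left hne
        rw [h2, hFy, mul_zero]
    intro y
    have hy : y ∈ ⨆ χ : ℂ, Af.maxGenEigenspace χ := by
      rw [Module.End.iSup_maxGenEigenspace_eq_top]; trivial
    induction hy using Submodule.iSup_induction' with
    | mem χ y hy => exact hgen χ y hy
    | zero => simp
    | add _ _ _ _ h h' => rw [lie_add, map_add, h, h', add_zero]
  -- conclude ns = 0, hence A = Sv is semisimple
  have hns0 : ns = 0 := hF ns hkey
  have hFs : (Fhat : g) = s := by
    have : Fhat = sf := by
      have := sub_eq_zero.mp (by rw [← hns]; exact hns0)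
      exact this
    rw [this]
  have hAS : A = Sv := by
    ext y
    rw [hA, hFs]
    rw [LieAlgebra.ad_apply, hads]
  have hfin : A.IsFinitelySemisimple := by
    rw [hAS]
    exact hSss.isFinitelySemisimple
  have heig : ∀ μ : ℂ, Module.End.eigenspace A μ = A.maxGenEigenspace μ :=
    fun μ => (hfin.maxGenEigenspace_eq_eigenspace μ).symm
  calc ⨆ μ : ℂ, Module.End.eigenspace A μ = ⨆ μ : ℂ, A.maxGenEigenspace μ := by
        exact iSup_congr heig
    _ = ⊤ := Module.End.iSup_maxGenEigenspace_eq_top A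
end

section
/- Let f be a finite-dimensional complex Frobenius Lie algebra with Frobenius functional F and principal element F̂, and suppose the endomorphism ad F̂ : f → f is diagonalizable, so that f = ⊕_λ f_λ where f_λ is the λ-eigenspace of ad F̂. Then for eigenvalues λ, μ with λ + μ ≠ 1 one has B_F(f_λ, f_μ) = 0, and for each λ the form B_F restricts to a non-degenerate pairing between f_λ and f_{1−λ}; in particular dim f_λ = dim f_{1−λ}, and f_0 is dual to f_1 under B_F. -/
/-- **Duality of eigenspaces under the Frobenius form.**
Let `f` be a finite-dimensional complex Frobenius Lie algebra with Frobenius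
functional `F` and principal element `F̂`, and suppose `ad F̂` is diagonalizable.
Then `B_F (f_lam, f_mu) = 0` whenever `lam + mu ≠ 1`, and `B_F` restricts to a
non-degenerate pairing between `f_lam` and `f_{1 - lam}`; in particular
`dim f_lam = dim f_{1 - lam}` (so `f_0` is dual to `f_1`). -/
theorem eigenspace_duality
    (L : Type*) [LieRing L] [LieAlgebra ℂ L] [FiniteDimensional ℂ L]
    (F : Module.Dual ℂ L)
    -- `F` is a Frobenius functional on `L`
    (hF : ∀ x : L, (∀ y : L, F ⁅x, y⁆ = 0) → x = 0)
    (Fhat : L)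
    -- `F̂` is the principal element associated to `F`
    (hFhat : ∀ x : L, F x = F ⁅Fhat, x⁆)
    -- `ad F̂ : L → L` is diagonalizable
    (hdiag : ⨆ μ : ℂ, Module.End.eigenspace (LieAlgebra.ad ℂ L Fhat) μ = ⊤) :
    (∀ lam mu : ℂ, lam + mu ≠ 1 →
      ∀ x ∈ Module.End.eigenspace (LieAlgebra.ad ℂ L Fhat) lam,
        ∀ y ∈ Module.End.eigenspace (LieAlgebra.ad ℂ L Fhat) mu, F ⁅x, y⁆ = 0) ∧
    (∀ lam : ℂ, ∀ x ∈ Module.End.eigenspace (LieAlgebra.ad ℂ L Fhat) lam,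
      (∀ y ∈ Module.End.eigenspace (LieAlgebra.ad ℂ L Fhat) (1 - lam),
        F ⁅x, y⁆ = 0) → x = 0) ∧
    (∀ lam : ℂ,
      Module.finrank ℂ (Module.End.eigenspace (LieAlgebra.ad ℂ L Fhat) lam) =
      Module.finrank ℂ (Module.End.eigenspace (LieAlgebra.ad ℂ L Fhat) (1 - lam))) := by
  -- membership in eigenspace as a bracket identity
  have hmem : ∀ (lam : ℂ) (x : L),
      x ∈ Module.End.eigenspace (LieAlgebra.ad ℂ L Fhat) lam → ⁅Fhat, x⁆ = lam • x := by
    intro lam x hx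
    rw [Module.End.mem_eigenspace_iff] at hx
    simpa [LieAlgebra.ad_apply] using hx
  -- key computation
  have key : ∀ (lam mu : ℂ) (x y : L),
      x ∈ Module.End.eigenspace (LieAlgebra.ad ℂ L Fhat) lam →
      y ∈ Module.End.eigenspace (LieAlgebra.ad ℂ L Fhat) mu →
      F ⁅x, y⁆ = (lam + mu) * F ⁅x, y⁆ := by
    intro lam mu x y hx hy
    have h1 : F ⁅x, y⁆ = F ⁅Fhat, ⁅x, y⁆⁆ := hFhat _
    rw [leibniz_lie, hmem lam x hx, hmem mu y hy] at h1
    simpa [add_mul, mul_comm] using h1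
  have part1 : ∀ lam mu : ℂ, lam + mu ≠ 1 →
      ∀ x ∈ Module.End.eigenspace (LieAlgebra.ad ℂ L Fhat) lam,
        ∀ y ∈ Module.End.eigenspace (LieAlgebra.ad ℂ L Fhat) mu, F ⁅x, y⁆ = 0 := by
    intro lam mu hne x hx y hy
    have h := key lam mu x y hx hy
    have h2 : (lam + mu - 1) * F ⁅x, y⁆ = 0 := by linear_combination -h
    rcases mul_eq_zero.1 h2 with h3 | h3
    · exact absurd (by linear_combination h3) hne
    · exact h3
  have part2 : ∀ lam : ℂ, ∀ x ∈ Module.End.eigenspace (LieAlgebra.ad ℂ L Fhat) lam,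
      (∀ y ∈ Module.End.eigenspace (LieAlgebra.ad ℂ L Fhat) (1 - lam),
        F ⁅x, y⁆ = 0) → x = 0 := by
    intro lam x hx h0
    apply hF
    intro y
    -- the linear functional y ↦ F ⁅x, y⁆ vanishes on every eigenspace
    set g : L →ₗ[ℂ] ℂ := F.comp (LieAlgebra.ad ℂ L x) with hg
    have hglie : ∀ z : L, g z = F ⁅x, z⁆ := fun z => rfl
    have hker : ∀ mu : ℂ, Module.End.eigenspace (LieAlgebra.ad ℂ L Fhat) mu ≤
        LinearMap.ker g := by
      intro mu z hz
      rw [LinearMap.mem_ker, hglie]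
      by_cases hcase : mu = 1 - lam
      · exact h0 z (hcase ▸ hz)
      · exact part1 lam mu (fun habs => hcase (by linear_combination habs)) x hx z hz
    have htop : (⊤ : Submodule ℂ L) ≤ LinearMap.ker g := by
      rw [← hdiag]; exact iSup_le hker
    have := htop (Submodule.mem_top : y ∈ ⊤)
    rw [LinearMap.mem_ker] at this
    rw [← hglie]; exact this
  refine ⟨part1, part2, ?_⟩
  -- dimension inequality in one direction
  have dimle : ∀ lam : ℂ,
      Module.finrank ℂ (Module.End.eigenspace (LieAlgebra.ad ℂ L Fhat) lam) ≤
      Module.finrank ℂ (Module.End.eigenspace (LieAlgebra.ad ℂ L Fhat) (1 - lam)) := by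
    intro lam
    set E₁ := Module.End.eigenspace (LieAlgebra.ad ℂ L Fhat) lam
    set E₂ := Module.End.eigenspace (LieAlgebra.ad ℂ L Fhat) (1 - lam)
    let φ : E₁ →ₗ[ℂ] Module.Dual ℂ E₂ :=
      { toFun := fun x =>
          { toFun := fun y => F ⁅(x : L), (y : L)⁆
            map_add' := fun a b => by simp
            map_smul' := fun c a => by simp }
        map_add' := fun a b => by ext y; simp
        map_smul' := fun c a => by ext y; simp }
    have hinj : Function.Injective φ := by
      rw [injective_iff_map_eq_zero]
      intro x hx0
      have : (x : L) = 0 := by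
        apply part2 lam x x.2
        intro y hy
        have := congrFun (congrArg DFunLike.coe hx0) ⟨y, hy⟩
        simpa [φ] using this
      exact Subtype.ext this
    calc Module.finrank ℂ E₁ ≤ Module.finrank ℂ (Module.Dual ℂ E₂) :=
          LinearMap.finrank_le_finrank_of_injective hinj
      _ = Module.finrank ℂ E₂ := Subspace.dual_finrank_eq
  intro lam
  refine le_antisymm (dimle lam) ?_
  have := dimle (1 - lam)
  rwa [sub_sub_cancel] at this
end

section
/- Let f be a nonzero finite-dimensional complex Frobenius Lie algebra with Frobenius functional F and principal element F̂, and suppose the endomorphism ad F̂ : f → f is diagonalizable. Then 1 is an eigenvalue of ad F̂, i.e. the eigenspace f_1 is nonzero. -/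
/-- **`1` is an eigenvalue of the principal element.**
If `f` is a nonzero finite-dimensional complex Frobenius Lie algebra with
Frobenius functional `F` and principal element `F̂`, and `ad F̂` is
diagonalizable, then `1` is an eigenvalue of `ad F̂`. -/
theorem one_is_eigenvalue_of_principal_element
    (L : Type*) [LieRing L] [LieAlgebra ℂ L] [FiniteDimensional ℂ L]
    [Nontrivial L]
    (F : Module.Dual ℂ L)
    -- `F` is a Frobenius functional on `L`
    (hF : ∀ x : L, (∀ y : L, F ⁅x, y⁆ = 0) → x = 0)
    (Fhat : L)
    -- `F̂` is the principal element associated to `F`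
    (hFhat : ∀ x : L, F x = F ⁅Fhat, x⁆)
    -- `ad F̂ : L → L` is diagonalizable
    (hdiag : ⨆ μ : ℂ, Module.End.eigenspace (LieAlgebra.ad ℂ L Fhat) μ = ⊤) :
    Module.End.eigenspace (LieAlgebra.ad ℂ L Fhat) 1 ≠ ⊥ := by
  intro h1
  have hFzero : ∀ x : L, F x = 0 := by
    intro x
    have hx : x ∈ ⨆ μ : ℂ, Module.End.eigenspace (LieAlgebra.ad ℂ L Fhat) μ := by
      rw [hdiag]; trivial
    refine Submodule.iSup_induction _ (motive := fun x => F x = 0) hx ?_ (by simp) ?_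
    · intro μ y hy
      rcases eq_or_ne μ 1 with rfl | hμ
      · rw [h1] at hy
        exact (Submodule.mem_bot ℂ).mp hy ▸ map_zero F
      · have hy' : ⁅Fhat, y⁆ = μ • y := by
          have := (Module.End.mem_eigenspace_iff).mp hy
          simpa [LieAlgebra.ad_apply] using this
        have : F y = μ * F y := by
          calc F y = F ⁅Fhat, y⁆ := hFhat y
            _ = μ * F y := by rw [hy', map_smul, smul_eq_mul]
        have h2 : (1 - μ) * F y = 0 := by linear_combination this
        rcases mul_eq_zero.mp h2 with h | h
        · exact absurd (by linear_combination -h) hμ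
        · exact h
    · intro a b ha hb
      simp [ha, hb]
  obtain ⟨x, hx⟩ := exists_ne (0 : L)
  exact hx (hF x fun y => hFzero _)
end

section
/- Let V be a finite-dimensional complex vector space and let μ : V × V → V be a Lie bracket on V that is Frobenius, i.e. there exists F ∈ V* such that the form (x,y) ↦ F(μ(x,y)) is non-degenerate. Then there is a neighborhood U of μ in the space of all bilinear maps V × V → V such that every Lie bracket μ' ∈ U is Frobenius. That is, a finite-dimensional Frobenius Lie algebra remains Frobenius under deformation. -/
/-- A bilinear map `μ : V × V → V` is a Lie bracket if it is alternating and
satisfies the Jacobi identity (in Leibniz form). -/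
def IsLieBracket {V : Type*} [AddCommGroup V] [Module ℂ V]
    (μ : V →ₗ[ℂ] V →ₗ[ℂ] V) : Prop :=
  (∀ x : V, μ x x = 0) ∧
  (∀ x y z : V, μ x (μ y z) = μ (μ x y) z + μ y (μ x z))

/-- A Lie bracket `μ` on `V` is Frobenius if there is a functional `F ∈ V*` such
that the skew form `(x, y) ↦ F (μ x y)` is non-degenerate. -/
def IsFrobeniusBracket {V : Type*} [AddCommGroup V] [Module ℂ V]
    (μ : V →ₗ[ℂ] V →ₗ[ℂ] V) : Prop :=
  ∃ F : Module.Dual ℂ V, ∀ x : V, (∀ y : V, F (μ x y) = 0) → x = 0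

/-- **Frobenius Lie algebras are stable under deformation.**
Let `μ` be a Frobenius Lie bracket on a finite-dimensional complex vector space
`V`.  Then there is a neighborhood `U` of `μ` in the space of all bilinear maps
`V × V → V` (with its natural topology, the module topology) such that every Lie
bracket `μ' ∈ U` is Frobenius. -/
theorem frobenius_stable_under_deformation
    (V : Type*) [AddCommGroup V] [Module ℂ V] [FiniteDimensional ℂ V]
    (μ : V →ₗ[ℂ] V →ₗ[ℂ] V) (hμ : IsLieBracket μ)
    (hfrob : IsFrobeniusBracket μ) :
    ∃ U ∈ @nhds _ (moduleTopology ℂ (V →ₗ[ℂ] V →ₗ[ℂ] V)) μ,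
      ∀ μ' ∈ U, IsLieBracket μ' → IsFrobeniusBracket μ' := by
  obtain ⟨F, hF⟩ := hfrob
  letI τ : TopologicalSpace (V →ₗ[ℂ] V →ₗ[ℂ] V) := moduleTopology ℂ (V →ₗ[ℂ] V →ₗ[ℂ] V)
  haveI : IsModuleTopology ℂ (V →ₗ[ℂ] V →ₗ[ℂ] V) := ⟨rfl⟩
  set n := Module.finrank ℂ V with hn
  let b : Module.Basis (Fin n) ℂ V := Module.finBasis ℂ V
  let b' : Module.Basis (Fin n) ℂ (Module.Dual ℂ V) := b.dualBasis
  let ψ : (V →ₗ[ℂ] V →ₗ[ℂ] V) →ₗ[ℂ] (V →ₗ[ℂ] Module.Dual ℂ V) :=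
    LinearMap.llcomp ℂ V (V →ₗ[ℂ] V) (Module.Dual ℂ V) (LinearMap.llcomp ℂ V V ℂ F)
  have hψ : ∀ (ν : V →ₗ[ℂ] V →ₗ[ℂ] V) (x y : V), ψ ν x y = F (ν x y) := fun _ _ _ => rfl
  let M : (V →ₗ[ℂ] V →ₗ[ℂ] V) →ₗ[ℂ] Matrix (Fin n) (Fin n) ℂ :=
    (LinearMap.toMatrix b b').toLinearMap ∘ₗ ψ
  have hcont : Continuous fun ν : V →ₗ[ℂ] V →ₗ[ℂ] V => (M ν).det :=
    (IsModuleTopology.continuous_of_linearMap M).matrix_det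
  refine ⟨{ν | (M ν).det ≠ 0}, ?_, ?_⟩
  · have hopen : IsOpen {ν : V →ₗ[ℂ] V →ₗ[ℂ] V | (M ν).det ≠ 0} :=
      isOpen_compl_singleton.preimage hcont
    refine hopen.mem_nhds ?_
    -- `ψ μ` is injective, hence bijective, hence has nonzero determinant
    have hinj : Function.Injective (ψ μ) := by
      rw [← LinearMap.ker_eq_bot, Submodule.eq_bot_iff]
      intro x hx
      refine hF x fun y => ?_
      have hx0 : ψ μ x = 0 := hx
      calc F (μ x y) = ψ μ x y := (hψ μ x y).symm
        _ = 0 := by rw [hx0]; rfl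
    have hbij : Function.Bijective (ψ μ) :=
      ⟨hinj, (LinearMap.injective_iff_surjective_of_finrank_eq_finrank
        (Subspace.dual_finrank_eq).symm).mp hinj⟩
    let e : V ≃ₗ[ℂ] Module.Dual ℂ V := LinearEquiv.ofBijective (ψ μ) hbij
    have : IsUnit (LinearMap.toMatrix b b' (ψ μ)).det := e.isUnit_det b b'
    simpa [M] using isUnit_iff_ne_zero.mp this
  · intro μ' hμ' _
    refine ⟨F, fun x hx => ?_⟩
    have hdet : IsUnit (LinearMap.toMatrix b b' (ψ μ')).det :=
      isUnit_iff_ne_zero.mpr hμ'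
    have hinj : Function.Injective (ψ μ') := by
      have := (LinearEquiv.ofIsUnitDet hdet).injective
      rwa [show ⇑(LinearEquiv.ofIsUnitDet hdet) = ⇑(ψ μ') from
        funext fun v => LinearEquiv.ofIsUnitDet_apply hdet v] at this
    have : ψ μ' x = 0 := by
      ext y; simpa [hψ] using hx y
    exact hinj (by simpa using this)
end

section
/- Let n ≥ 2 and let S be a set of n−1 ordered pairs (i,j) with i ≠ j of indices in {1,…,n} such that the undirected graph Γ_S on vertex set {1,…,n}, with an edge {i,j} for each (i,j) ∈ S, is connected (hence a tree). For s = (i,j) ∈ S, let C(s) be the set of vertices that remain connected to i in Γ_S after removing the edge {i,j}, and set d_s = Σ_{k ∈ C(s)} (e_{kk} − (1/n)·I) ∈ sl_n(ℂ). Then the family (d_s)_{s ∈ S} is linearly independent; consequently the d_s span the Cartan subalgebra of traceless diagonal matrices in sl_n(ℂ). -/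
open scoped Classical in
/-- The undirected graph `Γ_S` on `Fin n` associated to a set `S` of ordered
pairs: there is an edge `{i, j}` for each `(i, j) ∈ S`. -/
noncomputable def gammaGraph {n : ℕ} (S : Finset (Fin n × Fin n)) :
    SimpleGraph (Fin n) :=
  SimpleGraph.fromRel (fun a b => (a, b) ∈ S)

/-- `ε k = e_{kk} - (1/n) • I`. -/
noncomputable def epsMat (n : ℕ) (k : Fin n) : Matrix (Fin n) (Fin n) ℂ :=
  Matrix.single k k 1 - ((n : ℂ)⁻¹) • 1

open scoped Classical in
/-- For `s = (i, j) ∈ S`, `d_s = Σ_{k ∈ C(s)} ε_k` where `C(s)` is the set of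
vertices which remain connected to `i` in `Γ_S` after removing the edge `{i, j}`. -/
noncomputable def dMat {n : ℕ} (S : Finset (Fin n × Fin n))
    (s : Fin n × Fin n) : Matrix (Fin n) (Fin n) ℂ :=
  ∑ k : Fin n,
    if ((gammaGraph S).deleteEdges {s(s.1, s.2)}).Reachable k s.1 then
      epsMat n k else 0

section Helpers

open SimpleGraph

lemma aux_reach {V : Type*} {G : SimpleGraph V} {v w : V}
    (hvw : (G.deleteEdges {s(v, w)}).Reachable v w) :
    ∀ {a b : V}, G.Reachable a b → (G.deleteEdges {s(v, w)}).Reachable a b := by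
  intro a b ⟨p⟩
  induction p with
  | nil => exact Reachable.refl _
  | @cons x y z h q ih =>
    refine Reachable.trans ?_ ih
    by_cases he : s(x, y) = s(v, w)
    · rw [Sym2.eq_iff] at he
      rcases he with ⟨rfl, rfl⟩ | ⟨rfl, rfl⟩
      · exact hvw
      · exact hvw.symm
    · exact Adj.reachable (by rw [SimpleGraph.deleteEdges_adj]; exact ⟨h, by simpa using he⟩)

lemma conn_card_le {V : Type*} [Fintype V] [DecidableEq V] :
    ∀ (m : ℕ) (G : SimpleGraph V) [Fintype G.edgeSet],
      G.Connected → G.edgeFinset.card = m → Fintype.card V ≤ m + 1 := by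
  intro m
  induction m using Nat.strong_induction_on with
  | _ m ih =>
    intro G _ hconn hm
    by_cases hac : G.IsAcyclic
    · have := SimpleGraph.IsTree.card_edgeFinset ⟨hconn, hac⟩
      omega
    · rw [SimpleGraph.isAcyclic_iff_forall_adj_isBridge] at hac
      push_neg at hac
      obtain ⟨v, w, hadj, hnb⟩ := hac
      rw [SimpleGraph.isBridge_iff] at hnb
      push_neg at hnb
      have hreach : (G.deleteEdges {s(v, w)}).Reachable v w := hnb
      set G' := G.deleteEdges {s(v, w)} with hG'
      have hconn' : G'.Connected := by
        haveI : Nonempty V := hconn.nonempty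
        exact SimpleGraph.Connected.mk fun a b => aux_reach hreach (hconn.preconnected a b)
      letI : DecidableRel G'.Adj := Classical.decRel _
      have hef : G'.edgeFinset = G.edgeFinset.erase s(v, w) := by
        ext e
        simp only [SimpleGraph.mem_edgeFinset, Finset.mem_erase, hG',
          SimpleGraph.edgeSet_deleteEdges, Set.mem_diff, Set.mem_singleton_iff]
        tauto
      have hmem : s(v, w) ∈ G.edgeFinset := SimpleGraph.mem_edgeFinset.mpr hadj
      have h1 : 1 ≤ m := by
        have := Finset.card_pos.mpr ⟨_, hmem⟩
        omega
      have hcard' : G'.edgeFinset.card = m - 1 := by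
        rw [hef, Finset.card_erase_of_mem hmem, hm]
      have := ih (m - 1) (by omega) G' hconn' hcard'
      omega

lemma acyclic_of_card {V : Type*} [Fintype V] [DecidableEq V]
    (G : SimpleGraph V) [Fintype G.edgeSet] (hconn : G.Connected)
    (h : G.edgeFinset.card + 1 ≤ Fintype.card V) : G.IsAcyclic := by
  by_contra hac
  rw [SimpleGraph.isAcyclic_iff_forall_adj_isBridge] at hac
  push_neg at hac
  obtain ⟨v, w, hadj, hnb⟩ := hac
  rw [SimpleGraph.isBridge_iff] at hnb
  push_neg at hnb
  have hreach : (G.deleteEdges {s(v, w)}).Reachable v w := hnb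
  set G' := G.deleteEdges {s(v, w)} with hG'
  have hconn' : G'.Connected := by
    haveI : Nonempty V := hconn.nonempty
    exact SimpleGraph.Connected.mk fun a b => aux_reach hreach (hconn.preconnected a b)
  letI : DecidableRel G'.Adj := Classical.decRel _
  have hef : G'.edgeFinset = G.edgeFinset.erase s(v, w) := by
    ext e
    simp only [SimpleGraph.mem_edgeFinset, Finset.mem_erase, hG',
      SimpleGraph.edgeSet_deleteEdges, Set.mem_diff, Set.mem_singleton_iff]
    tauto
  have hmem : s(v, w) ∈ G.edgeFinset := SimpleGraph.mem_edgeFinset.mpr hadj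
  have h1 : 1 ≤ G.edgeFinset.card := Finset.card_pos.mpr ⟨_, hmem⟩
  have hcard' : G'.edgeFinset.card = G.edgeFinset.card - 1 := by
    rw [hef, Finset.card_erase_of_mem hmem]
  have := conn_card_le _ G' hconn' hcard'
  omega

lemma epsMat_apply_diag (n : ℕ) (k a : Fin n) :
    epsMat n k a a = (if k = a then (1 : ℂ) else 0) - (n : ℂ)⁻¹ := by
  simp [epsMat, Matrix.single, Matrix.sub_apply, Matrix.smul_apply,
    Matrix.one_apply, Matrix.of_apply]

lemma epsMat_apply_ne (n : ℕ) (k a b : Fin n) (hab : a ≠ b) :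
    epsMat n k a b = 0 := by
  have h1 : ¬(k = a ∧ k = b) := fun ⟨h1, h2⟩ => hab (h1 ▸ h2)
  simp [epsMat, Matrix.single, Matrix.sub_apply, Matrix.smul_apply,
    Matrix.one_apply, Matrix.of_apply, h1, hab]

lemma epsMat_trace (n : ℕ) (hn : 2 ≤ n) (k : Fin n) : (epsMat n k).trace = 0 := by
  have hne : (n : ℂ) ≠ 0 := Nat.cast_ne_zero.mpr (by omega)
  have h1 : (Matrix.single k k (1 : ℂ)).trace = 1 := by
    simp only [Matrix.trace, Matrix.diag, Matrix.single, Matrix.of_apply, and_self]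
    simp
  rw [epsMat, Matrix.trace_sub, h1, Matrix.trace_smul, Matrix.trace_one]
  simp only [Fintype.card_fin, smul_eq_mul]
  field_simp
  exact sub_self 1

open scoped Classical in
lemma dMat_diag_sub {n : ℕ} (S : Finset (Fin n × Fin n)) (p : Fin n × Fin n) (i j : Fin n) :
    dMat S p i i - dMat S p j j =
      (if ((gammaGraph S).deleteEdges {s(p.1, p.2)}).Reachable i p.1 then (1 : ℂ) else 0)
      - (if ((gammaGraph S).deleteEdges {s(p.1, p.2)}).Reachable j p.1 then (1 : ℂ) else 0) := by
  have h2 : ∀ a : Fin n, dMat S p a a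
      = ∑ k, (if ((gammaGraph S).deleteEdges {s(p.1, p.2)}).Reachable k p.1
          then epsMat n k a a else 0) := by
    intro a
    rw [dMat, Matrix.sum_apply]
    refine Finset.sum_congr rfl fun k _ => ?_
    rw [apply_ite (fun M : Matrix (Fin n) (Fin n) ℂ => M a a), Matrix.zero_apply]
  have key : ∀ a : Fin n,
      (∑ k, if ((gammaGraph S).deleteEdges {s(p.1, p.2)}).Reachable k p.1
          then (if k = a then (1 : ℂ) else 0) else 0)
        = if ((gammaGraph S).deleteEdges {s(p.1, p.2)}).Reachable a p.1
            then (1 : ℂ) else 0 := by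
    intro a
    rw [Finset.sum_congr rfl (fun k _ =>
      show (if ((gammaGraph S).deleteEdges {s(p.1, p.2)}).Reachable k p.1
              then (if k = a then (1 : ℂ) else 0) else 0)
          = if k = a
              then (if ((gammaGraph S).deleteEdges {s(p.1, p.2)}).Reachable k p.1
                then (1 : ℂ) else 0) else 0 from
        by by_cases h : k = a <;> simp [h])]
    simp
  rw [h2, h2, ← Finset.sum_sub_distrib]
  rw [Finset.sum_congr rfl (fun k _ =>
    show (if ((gammaGraph S).deleteEdges {s(p.1, p.2)}).Reachable k p.1
            then epsMat n k i i else 0)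
        - (if ((gammaGraph S).deleteEdges {s(p.1, p.2)}).Reachable k p.1
            then epsMat n k j j else 0)
        = (if ((gammaGraph S).deleteEdges {s(p.1, p.2)}).Reachable k p.1
            then (if k = i then (1 : ℂ) else 0) else 0)
          - (if ((gammaGraph S).deleteEdges {s(p.1, p.2)}).Reachable k p.1
            then (if k = j then (1 : ℂ) else 0) else 0) from by
      by_cases h : ((gammaGraph S).deleteEdges {s(p.1, p.2)}).Reachable k p.1
      · simp only [h, if_true, epsMat_apply_diag]; ring
      · simp [h])]
  rw [Finset.sum_sub_distrib, key, key]

end Helpers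

/-- **Linear independence of the `d_s`.**
Let `n ≥ 2` and let `S` be a set of `n - 1` ordered pairs `(i, j)`, `i ≠ j`, of
indices such that the associated undirected graph `Γ_S` is connected (hence a
tree).  Then the family `(d_s)_{s ∈ S}` is linearly independent; consequently the
`d_s` span the Cartan subalgebra of traceless diagonal matrices in `sl n ℂ`. -/
theorem dMat_linearIndependent_and_spans_cartan
    (n : ℕ) (hn : 2 ≤ n) (S : Finset (Fin n × Fin n))
    (hne : ∀ p ∈ S, p.1 ≠ p.2)
    (hcard : S.card = n - 1)
    (hconn : (gammaGraph S).Connected) :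
    LinearIndependent ℂ (fun s : S => dMat S (s : Fin n × Fin n)) ∧
    (Submodule.span ℂ (Set.range (fun s : S => dMat S (s : Fin n × Fin n))) :
        Set (Matrix (Fin n) (Fin n) ℂ)) =
      {A : Matrix (Fin n) (Fin n) ℂ | A.IsDiag ∧ A.trace = 0} := by
  classical
  letI : DecidableRel (gammaGraph S).Adj := Classical.decRel _
  have hGadj : ∀ a b : Fin n,
      (gammaGraph S).Adj a b ↔ a ≠ b ∧ ((a, b) ∈ S ∨ (b, a) ∈ S) := fun a b =>
    SimpleGraph.fromRel_adj _ a b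
  -- the edge set of the graph
  have hsub : (gammaGraph S).edgeFinset ⊆ S.image (fun p => s(p.1, p.2)) := by
    intro e
    induction e using Sym2.ind with
    | _ a b =>
      intro he
      rw [SimpleGraph.mem_edgeFinset, SimpleGraph.mem_edgeSet, hGadj] at he
      obtain ⟨hne', h | h⟩ := he
      · exact Finset.mem_image.mpr ⟨(a, b), h, rfl⟩
      · exact Finset.mem_image.mpr ⟨(b, a), h, Sym2.eq_swap⟩
  have hcard1 : (gammaGraph S).edgeFinset.card ≤ n - 1 :=
    le_trans (Finset.card_le_card hsub) (le_trans Finset.card_image_le hcard.le)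
  have hcard2 : n ≤ (gammaGraph S).edgeFinset.card + 1 := by
    have := conn_card_le (gammaGraph S).edgeFinset.card (gammaGraph S) hconn rfl
    simpa using this
  have hcardE : (gammaGraph S).edgeFinset.card = n - 1 := by omega
  have himg : (gammaGraph S).edgeFinset = S.image (fun p => s(p.1, p.2)) :=
    Finset.eq_of_subset_of_card_le hsub
      (by rw [hcardE]; exact le_trans Finset.card_image_le hcard.le)
  have hinjOn : Set.InjOn (fun p : Fin n × Fin n => s(p.1, p.2)) S := by
    apply Finset.injOn_of_card_image_eq
    rw [← himg, hcardE, hcard]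
  have hacyc : (gammaGraph S).IsAcyclic :=
    acyclic_of_card _ hconn (by rw [hcardE, Fintype.card_fin]; omega)
  have hAdjS : ∀ p ∈ S, (gammaGraph S).Adj p.1 p.2 := fun p hp =>
    (hGadj _ _).mpr ⟨hne p hp, Or.inl (by simpa using hp)⟩
  have hbridge : ∀ p ∈ S,
      ¬((gammaGraph S).deleteEdges {s(p.1, p.2)}).Reachable p.1 p.2 := by
    intro p hp
    have := (SimpleGraph.isAcyclic_iff_forall_adj_isBridge.mp hacyc) (hAdjS p hp)
    exact SimpleGraph.isBridge_iff.mp this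
  -- the key diagonal-difference computation
  have hkey : ∀ s t : {x // x ∈ S},
      dMat S (s : Fin n × Fin n) (t : Fin n × Fin n).1 (t : Fin n × Fin n).1
        - dMat S (s : Fin n × Fin n) (t : Fin n × Fin n).2 (t : Fin n × Fin n).2
      = if s = t then (1 : ℂ) else 0 := by
    intro s t
    rw [dMat_diag_sub]
    by_cases hst : s = t
    · subst hst
      rw [if_pos rfl]
      have hR1 : ((gammaGraph S).deleteEdges
          {s((s : Fin n × Fin n).1, (s : Fin n × Fin n).2)}).Reachable
          (s : Fin n × Fin n).1 (s : Fin n × Fin n).1 := SimpleGraph.Reachable.refl _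
      have hR2 : ¬((gammaGraph S).deleteEdges
          {s((s : Fin n × Fin n).1, (s : Fin n × Fin n).2)}).Reachable
          (s : Fin n × Fin n).2 (s : Fin n × Fin n).1 :=
        fun h => hbridge _ s.2 h.symm
      rw [if_pos hR1, if_neg hR2, sub_zero]
    · rw [if_neg hst]
      have hedge : s((t : Fin n × Fin n).1, (t : Fin n × Fin n).2)
          ≠ s((s : Fin n × Fin n).1, (s : Fin n × Fin n).2) :=
        fun h => hst (Subtype.ext (hinjOn s.2 t.2 h.symm))
      have hadj' : ((gammaGraph S).deleteEdges
          {s((s : Fin n × Fin n).1, (s : Fin n × Fin n).2)}).Adj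
          (t : Fin n × Fin n).1 (t : Fin n × Fin n).2 := by
        rw [SimpleGraph.deleteEdges_adj]
        exact ⟨hAdjS _ t.2, by simpa using hedge⟩
      by_cases hr : ((gammaGraph S).deleteEdges
          {s((s : Fin n × Fin n).1, (s : Fin n × Fin n).2)}).Reachable
          (t : Fin n × Fin n).1 (s : Fin n × Fin n).1
      · rw [if_pos hr, if_pos (hadj'.reachable.symm.trans hr), sub_self]
      · rw [if_neg hr, if_neg (fun h => hr (hadj'.reachable.trans h)), sub_self]
  -- linear independence
  have hli : LinearIndependent ℂ (fun s : S => dMat S (s : Fin n × Fin n)) := by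
    rw [Fintype.linearIndependent_iff]
    intro g hg t
    have h0 := congrArg (fun A : Matrix (Fin n) (Fin n) ℂ =>
      A (t : Fin n × Fin n).1 (t : Fin n × Fin n).1
        - A (t : Fin n × Fin n).2 (t : Fin n × Fin n).2) hg
    simp only [Matrix.sum_apply, Matrix.smul_apply, Matrix.zero_apply, smul_eq_mul,
      sub_zero] at h0
    rw [← Finset.sum_sub_distrib] at h0
    rw [Finset.sum_congr rfl (fun s _ => by rw [← mul_sub, hkey s t])] at h0
    simpa using h0
  refine ⟨hli, ?_⟩
  -- the Cartan subalgebra as a submodule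
  have hnne : (n : ℂ) ≠ 0 := Nat.cast_ne_zero.mpr (by omega)
  let H : Submodule ℂ (Matrix (Fin n) (Fin n) ℂ) :=
    { carrier := {A : Matrix (Fin n) (Fin n) ℂ | A.IsDiag ∧ A.trace = 0}
      add_mem' := fun ha hb => ⟨ha.1.add hb.1, by rw [Matrix.trace_add, ha.2, hb.2, add_zero]⟩
      zero_mem' := ⟨Matrix.isDiag_zero, by simp⟩
      smul_mem' := fun c A hA => ⟨hA.1.smul c, by rw [Matrix.trace_smul, hA.2, smul_zero]⟩ }
  have hmemH : ∀ p : Fin n × Fin n, dMat S p ∈ H := by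
    intro p
    constructor
    · intro a b hab
      show dMat S p a b = 0
      simp only [dMat, Matrix.sum_apply]
      refine Finset.sum_eq_zero fun k _ => ?_
      by_cases h : ((gammaGraph S).deleteEdges {s(p.1, p.2)}).Reachable k p.1
      · simp [h, epsMat_apply_ne n k a b hab]
      · simp [h]
    · show (dMat S p).trace = 0
      rw [dMat, Matrix.trace_sum]
      refine Finset.sum_eq_zero fun k _ => ?_
      by_cases h : ((gammaGraph S).deleteEdges {s(p.1, p.2)}).Reachable k p.1
      · simp [h, epsMat_trace n hn k]
      · simp [h]
  have hle : Submodule.span ℂ (Set.range fun s : S => dMat S (s : Fin n × Fin n)) ≤ H :=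
    Submodule.span_le.mpr (by rintro _ ⟨s, rfl⟩; exact hmemH s)
  -- finrank bound for H
  let T : Matrix (Fin n) (Fin n) ℂ →ₗ[ℂ] (Fin (n - 1) → ℂ) :=
    { toFun := fun A i => A (Fin.castLE (Nat.sub_le n 1) i) (Fin.castLE (Nat.sub_le n 1) i)
      map_add' := fun A B => by ext i; simp [Matrix.add_apply]
      map_smul' := fun c A => by ext i; simp [Matrix.smul_apply] }
  have hinjT : Function.Injective (T.comp H.subtype) := by
    rw [← LinearMap.ker_eq_bot, LinearMap.ker_eq_bot']
    rintro ⟨A, hA⟩ h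
    have h' : ∀ i : Fin (n - 1),
        A (Fin.castLE (Nat.sub_le n 1) i) (Fin.castLE (Nat.sub_le n 1) i) = 0 := by
      intro i
      have := congrFun h i
      simpa [T] using this
    have h0 : ∀ k : Fin n, k.val < n - 1 → A k k = 0 := by
      intro k hk
      have hkk : (Fin.castLE (Nat.sub_le n 1) ⟨k.val, hk⟩) = k := Fin.ext rfl
      have := h' ⟨k.val, hk⟩
      rwa [hkk] at this
    have hk0 : A ⟨n - 1, by omega⟩ ⟨n - 1, by omega⟩ = 0 := by
      have ht : ∑ i, A i i = 0 := by
        have := hA.2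
        simpa [Matrix.trace, Matrix.diag] using this
      have hs : ∑ i, A i i = A ⟨n - 1, by omega⟩ ⟨n - 1, by omega⟩ :=
        Finset.sum_eq_single_of_mem ⟨n - 1, by omega⟩ (Finset.mem_univ _)
          (fun b _ hb => h0 b (by
            have hbv : b.val ≠ n - 1 := fun hh => hb (Fin.ext hh)
            have := b.isLt
            omega))
      rw [← hs, ht]
    have hdiag : ∀ k : Fin n, A k k = 0 := by
      intro k
      by_cases hk : k.val < n - 1
      · exact h0 k hk
      · have hkk : k = ⟨n - 1, by omega⟩ := Fin.ext (by show k.val = n - 1; have := k.isLt; omega)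
        rw [hkk]; exact hk0
    apply Subtype.ext
    show A = 0
    ext a b
    by_cases hab : a = b
    · subst hab; simpa using hdiag a
    · simpa using hA.1 hab
  have hfrH : Module.finrank ℂ H ≤ n - 1 := by
    have h1 := LinearMap.finrank_le_finrank_of_injective hinjT
    rwa [Module.finrank_fin_fun] at h1
  have hfrS : Module.finrank ℂ
      (Submodule.span ℂ (Set.range fun s : S => dMat S (s : Fin n × Fin n))) = n - 1 := by
    rw [finrank_span_eq_card hli, Fintype.card_coe, hcard]
  have heq : Submodule.span ℂ (Set.range fun s : S => dMat S (s : Fin n × Fin n)) = H :=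
    Submodule.eq_of_le_of_finrank_le hle (by rw [hfrS]; exact hfrH)
  rw [heq]
  rfl
end

section
/- Let n ≥ 2 and let S be a set of n−1 ordered pairs (i,j) with i ≠ j of indices in {1,…,n} such that the undirected graph Γ_S on {1,…,n}, with an edge {i,j} for each (i,j) ∈ S, is a tree. For s = (i,j) ∈ S, let C(s) be the set of vertices connected to i in Γ_S with the edge {i,j} removed, and set d_s = Σ_{k ∈ C(s)} (e_{kk} − (1/n)·I). Then for all s, s' ∈ S one has [d_s, e_{s'}] = e_{s'} if s' = s and [d_s, e_{s'}] = 0 if s' ≠ s, where e_{s'} = e_{i'j'} for s' = (i',j'). -/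
open scoped Classical in
/-- A connected graph on a finite vertex type has at least `card V - 1` edges. -/
lemma conn_card_le_aux {V : Type*} [Fintype V] (G : SimpleGraph V)
    (h : G.Connected) : Fintype.card V ≤ G.edgeFinset.card + 1 := by
  obtain ⟨r⟩ := h.nonempty
  have key : ∀ v : V, v ≠ r → ∃ x, G.Adj v x ∧ G.dist x r < G.dist v r := by
    intro v hv
    obtain ⟨p, hp⟩ := h.exists_walk_length_eq_dist v r
    cases p with
    | nil => exact absurd rfl hv
    | cons hadj q =>
      refine ⟨_, hadj, ?_⟩
      have := SimpleGraph.dist_le q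
      simp [SimpleGraph.Walk.length_cons] at hp
      omega
  choose! x hx1 hx2 using key
  have hmaps : ∀ v ∈ ({r}ᶜ : Finset V), s(v, x v) ∈ G.edgeFinset := by
    intro v hv
    simp only [Finset.mem_compl, Finset.mem_singleton] at hv
    simpa using (hx1 v hv)
  have hinj : Set.InjOn (fun v => s(v, x v)) ({r}ᶜ : Finset V) := by
    intro a ha b hb hab
    simp only [Finset.coe_compl, Finset.coe_singleton, Set.mem_compl_iff,
      Set.mem_singleton_iff] at ha hb
    rcases Sym2.eq_iff.mp hab with ⟨h1, _⟩ | ⟨h1, h2⟩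
    · exact h1
    · exfalso
      have h3 := hx2 a ha
      have h4 := hx2 b hb
      rw [h2] at h3
      rw [← h1] at h4
      omega
  have := Finset.card_le_card_of_injOn _ hmaps hinj
  have hc : ({r}ᶜ : Finset V).card = Fintype.card V - 1 := by
    simp [Finset.card_compl]
  have : 1 ≤ Fintype.card V := @Fintype.card_pos _ _ ⟨r⟩
  omega

open scoped Classical in
/-- Under the hypotheses of the main theorem, the map `(i,j) ↦ {i,j}` is
injective on `S`, and every edge of `Γ_S` is a bridge. -/
lemma gamma_facts {n : ℕ} (S : Finset (Fin n × Fin n))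
    (hne : ∀ p ∈ S, p.1 ≠ p.2) (hcard : S.card = n - 1)
    (hconn : (gammaGraph S).Connected) :
    Set.InjOn (fun p : Fin n × Fin n => s(p.1, p.2)) S ∧
    ∀ s ∈ S, ¬ ((gammaGraph S).deleteEdges {s(s.1, s.2)}).Reachable s.1 s.2 := by
  have hn1 : 1 ≤ n := by
    have : Nonempty (Fin n) := hconn.nonempty
    have h := Fintype.card_pos (α := Fin n)
    simp only [Fintype.card_fin] at h
    omega
  set G := gammaGraph S with hG
  have hsub : G.edgeFinset ⊆ S.image (fun p => s(p.1, p.2)) := by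
    intro e he
    induction e with
    | _ a b =>
      rw [SimpleGraph.mem_edgeFinset, SimpleGraph.mem_edgeSet] at he
      rw [hG, gammaGraph, SimpleGraph.fromRel_adj] at he
      obtain ⟨-, h | h⟩ := he
      · exact Finset.mem_image.mpr ⟨(a, b), h, rfl⟩
      · exact Finset.mem_image.mpr ⟨(b, a), h, Sym2.eq_swap⟩
  have hle : G.edgeFinset.card ≤ n - 1 :=
    le_trans (Finset.card_le_card hsub) (le_trans (Finset.card_image_le) hcard.le)
  have hge : n ≤ G.edgeFinset.card + 1 := by
    simpa using conn_card_le_aux G hconn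
  have hEcard : G.edgeFinset.card = n - 1 := by omega
  have hinj : Set.InjOn (fun p : Fin n × Fin n => s(p.1, p.2)) S := by
    rw [← Finset.card_image_iff]
    have h1 : (S.image (fun p : Fin n × Fin n => s(p.1, p.2))).card ≤ S.card :=
      Finset.card_image_le
    have h2 : G.edgeFinset.card ≤ (S.image (fun p : Fin n × Fin n => s(p.1, p.2))).card :=
      Finset.card_le_card hsub
    omega
  refine ⟨hinj, ?_⟩
  intro s hs hreach
  set e : Sym2 (Fin n) := s(s.1, s.2) with he
  have heE : e ∈ G.edgeFinset := by
    rw [SimpleGraph.mem_edgeFinset, SimpleGraph.mem_edgeSet]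
    exact SimpleGraph.fromRel_adj .. |>.mpr ⟨hne s hs, Or.inl hs⟩
  set G' := G.deleteEdges {e} with hG'
  have hpre : G'.Connected := by
    rw [SimpleGraph.connected_iff]
    refine ⟨fun u v => ?_, hconn.nonempty⟩
    have step : ∀ a c : Fin n, G.Adj a c → G'.Reachable a c := by
      intro a c hadj
      by_cases hab : s(a, c) = e
      · rw [he, Sym2.eq_iff] at hab
        rcases hab with ⟨h1, h2⟩ | ⟨h1, h2⟩
        · subst h1; subst h2; exact hreach
        · subst h1; subst h2; exact hreach.symm
      · exact SimpleGraph.Adj.reachable (by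
          rw [hG', SimpleGraph.deleteEdges_adj]
          exact ⟨hadj, by simpa using hab⟩)
    obtain ⟨p⟩ := hconn.preconnected u v
    induction p with
    | nil => exact SimpleGraph.Reachable.refl _
    | cons hadj q ih => exact (step _ _ hadj).trans ih
  have hE' : G'.edgeFinset = G.edgeFinset.erase e := by
    ext f
    simp [hG', SimpleGraph.edgeSet_deleteEdges, Finset.mem_erase, and_comm]
  have h2 := conn_card_le_aux G' hpre
  replace h2 : Fintype.card (Fin n) ≤ (G.edgeFinset.erase e).card + 1 := by
    rw [← hE']; convert h2 using 3; ext; simp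
  rw [Finset.card_erase_of_mem heE, hEcard, Fintype.card_fin] at h2
  have hn2 : 1 ≤ S.card := Finset.card_pos.mpr ⟨s, hs⟩
  omega

/-- The bracket of a diagonal matrix with a matrix unit. -/
lemma diag_bracket_aux {n : ℕ} (d : Fin n → ℂ) (i j : Fin n) :
    ⁅Matrix.diagonal d, Matrix.single i j (1:ℂ)⁆ =
      (d i - d j) • Matrix.single i j 1 := by
  rw [Ring.lie_def]
  ext a b
  simp [Matrix.diagonal_mul, Matrix.mul_diagonal, Matrix.single, Matrix.smul_apply]
  split_ifs with h
  · obtain ⟨rfl, rfl⟩ := h; ring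
  · ring

/-- The sum of `ε k` over an indicator set is a diagonal matrix. -/
lemma sum_eps_diag_aux {n : ℕ} (r : Fin n → Prop) (inst : ∀ k, Decidable (r k)) :
    (∑ k : Fin n, @ite _ (r k) (inst k) (epsMat n k) 0) =
      Matrix.diagonal (fun a => (@ite _ (r a) (inst a) (1:ℂ) 0)
        - ((@Finset.filter _ r inst Finset.univ).card : ℂ) * (n : ℂ)⁻¹) := by
  ext a b
  rw [Matrix.sum_apply]
  by_cases hab : a = b
  · subst hab
    have h1 : ∀ k : Fin n, (if r k then epsMat n k else 0) a a
        = (if k = a then (if r k then (1:ℂ) else 0) else 0)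
          - (if r k then (n : ℂ)⁻¹ else 0) := by
      intro k
      by_cases hrk : r k
      · by_cases hka : k = a
        · subst hka; simp [hrk, epsMat, Matrix.single, Matrix.one_apply]
        · simp [hrk, hka, Ne.symm hka, epsMat, Matrix.single,
            Matrix.one_apply]
      · simp [hrk]
    rw [Finset.sum_congr rfl (fun k _ => h1 k), Finset.sum_sub_distrib]
    rw [Finset.sum_ite_eq' Finset.univ a (fun k => if r k then (1:ℂ) else 0)]
    rw [← Finset.sum_filter, Finset.sum_const]
    simp [Matrix.diagonal_apply_eq, mul_comm]
  · have h1 : ∀ k : Fin n, (if r k then epsMat n k else 0) a b = 0 := by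
      intro k
      by_cases hrk : r k
      · simp [hrk, hab, epsMat, Matrix.single, Matrix.one_apply]
        rintro rfl
        exact hab
      · simp [hrk]
    rw [Finset.sum_congr rfl (fun k _ => h1 k)]
    simp [Matrix.diagonal_apply_ne _ hab]

/-- **The bracket relations `[d_s, e_{s'}] = δ_{s s'} e_{s'}`.**
Let `n ≥ 2` and let `S` be a set of `n - 1` ordered pairs `(i, j)`, `i ≠ j`,
whose undirected graph `Γ_S` is a tree.  Then for `s, s' ∈ S` one has
`⁅d_s, e_{s'}⁆ = e_{s'}` if `s' = s`, and `⁅d_s, e_{s'}⁆ = 0` otherwise. -/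
theorem dMat_bracket_stdBasisMatrix
    (n : ℕ) (hn : 2 ≤ n) (S : Finset (Fin n × Fin n))
    (hne : ∀ p ∈ S, p.1 ≠ p.2)
    (hcard : S.card = n - 1)
    (hconn : (gammaGraph S).Connected) :
    ∀ s ∈ S, ∀ s' ∈ S,
      ⁅dMat S s, Matrix.single s'.1 s'.2 (1 : ℂ)⁆ =
        if s' = s then Matrix.single s'.1 s'.2 (1 : ℂ) else 0 := by
  obtain ⟨hinj, hbridge⟩ := gamma_facts S hne hcard hconn
  intro s hs s' hs'
  rw [dMat, sum_eps_diag_aux, diag_bracket_aux]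
  set G' := (gammaGraph S).deleteEdges {s(s.1, s.2)} with hG'
  by_cases hss : s' = s
  · subst hss
    have h1 : G'.Reachable s'.1 s'.1 := SimpleGraph.Reachable.refl _
    have h2 : ¬ G'.Reachable s'.2 s'.1 := fun h => hbridge s' hs' h.symm
    rw [if_pos h1, if_neg h2, if_pos rfl, sub_sub_sub_cancel_right, sub_zero,
      one_smul]
  · have hadj : G'.Adj s'.1 s'.2 := by
      rw [hG', SimpleGraph.deleteEdges_adj]
      constructor
      · exact SimpleGraph.fromRel_adj .. |>.mpr ⟨hne s' hs', Or.inl hs'⟩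
      · simp only [Set.mem_singleton_iff]
        intro h
        exact hss (hinj hs' hs h)
    have hiff : G'.Reachable s'.1 s.1 ↔ G'.Reachable s'.2 s.1 :=
      ⟨fun h => hadj.symm.reachable.trans h, fun h => hadj.reachable.trans h⟩
    rw [if_neg hss]
    by_cases h1 : G'.Reachable s'.1 s.1
    · have h2 := hiff.mp h1
      rw [if_pos h1, if_pos h2, sub_sub_sub_cancel_right, sub_self, zero_smul]
    · have h2 : ¬ G'.Reachable s'.2 s.1 := fun h => h1 (hiff.mpr h)
      rw [if_neg h1, if_neg h2, sub_sub_sub_cancel_right, sub_self, zero_smul]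
end

section
/- Let n ≥ 2 and let S be a set of n−1 ordered pairs (i,j) with i ≠ j of indices in {1,…,n} whose undirected graph Γ_S on {1,…,n} is a tree, with associated functional F_S(x) = Σ_{(i,j)∈S} x_{ij} and element D_S = Σ_{s∈S} d_s ∈ sl_n(ℂ). Then F_S(x) = F_S([D_S, x]) for all x ∈ sl_n(ℂ). Consequently, if f is a Lie subalgebra of sl_n(ℂ) containing the Cartan subalgebra h of traceless diagonal matrices and the restriction of F_S to f is a Frobenius functional on f, then the principal element of f associated to F_S equals D_S. -/
open SimpleGraph in
lemma my_deleteEdges_connected {V : Type*} {G : SimpleGraph V} {v w : V}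
    (hconn : G.Connected)
    (hreach : (G.deleteEdges {s(v, w)}).Reachable v w) :
    (G.deleteEdges {s(v, w)}).Connected := by
  have key : ∀ {a b : V}, G.Walk a b → (G.deleteEdges {s(v, w)}).Reachable a b := by
    intro a b p
    induction p with
    | nil => exact Reachable.refl _
    | @cons a c b h q ih =>
      refine Reachable.trans ?_ ih
      by_cases he : s(a, c) = s(v, w)
      · rcases Sym2.eq_iff.mp he with ⟨rfl, rfl⟩ | ⟨rfl, rfl⟩
        · exact hreach
        · exact hreach.symm
      · exact (SimpleGraph.deleteEdges_adj.mpr ⟨h, by simp [he]⟩).reachable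
  have : Nonempty V := hconn.nonempty
  exact ⟨fun a b => (hconn.preconnected a b).elim fun p => key p⟩

open SimpleGraph in
open scoped Classical in
lemma my_connected_card_le {V : Type*} [Fintype V] :
    ∀ (N : ℕ) (G : SimpleGraph V), G.edgeSet.ncard ≤ N → G.Connected →
      Fintype.card V ≤ G.edgeSet.ncard + 1 := by
  intro N
  induction N with
  | zero =>
    intro G hle hconn
    by_cases hac : G.IsAcyclic
    · have ht : G.IsTree := ⟨hconn, hac⟩
      have := ht.card_edgeFinset
      rw [Set.ncard_eq_toFinset_card' G.edgeSet, ← this]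
      rw [← Set.ncard_eq_toFinset_card' G.edgeSet, ← Set.ncard_coe_finset, SimpleGraph.coe_edgeFinset]
    · rw [isAcyclic_iff_forall_adj_isBridge] at hac
      push_neg at hac
      obtain ⟨a, b, hadj, _⟩ := hac
      have : 0 < G.edgeSet.ncard := by
        rw [Set.ncard_pos (Set.toFinite _)]
        exact ⟨s(a, b), hadj⟩
      omega
  | succ N ih =>
    intro G hle hconn
    by_cases hac : G.IsAcyclic
    · have ht : G.IsTree := ⟨hconn, hac⟩
      have := ht.card_edgeFinset
      rw [Set.ncard_eq_toFinset_card' G.edgeSet, ← this]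
      rw [← Set.ncard_eq_toFinset_card' G.edgeSet, ← Set.ncard_coe_finset, SimpleGraph.coe_edgeFinset]
    · rw [isAcyclic_iff_forall_adj_isBridge] at hac
      push_neg at hac
      obtain ⟨a, b, hadj, hbr⟩ := hac
      rw [isBridge_iff] at hbr
      push_neg at hbr
      have hreach : (G.deleteEdges {s(a, b)}).Reachable a b := hbr
      have hconn' := my_deleteEdges_connected hconn hreach
      have hcard' : (G.deleteEdges {s(a, b)}).edgeSet.ncard = G.edgeSet.ncard - 1 := by
        rw [edgeSet_deleteEdges]
        exact Set.ncard_diff_singleton_of_mem (show s(a, b) ∈ G.edgeSet from hadj)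
      have h1 : 0 < G.edgeSet.ncard := by
        rw [Set.ncard_pos (Set.toFinite _)]
        exact ⟨s(a, b), hadj⟩
      have := ih (G.deleteEdges {s(a, b)}) (by omega) hconn'
      omega


/-- `D_S = Σ_{s ∈ S} d_s`. -/
noncomputable def DMat {n : ℕ} (S : Finset (Fin n × Fin n)) :
    Matrix (Fin n) (Fin n) ℂ :=
  ∑ s ∈ S, dMat S s

/-- The small functional `F_S (x) = Σ_{(i, j) ∈ S} x_{ij}`. -/
noncomputable def FS {n : ℕ} (S : Finset (Fin n × Fin n))
    (x : Matrix (Fin n) (Fin n) ℂ) : ℂ :=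
  ∑ p ∈ S, x p.1 p.2

open scoped Classical in
lemma my_edge_facts {n : ℕ} (hn : 2 ≤ n) (S : Finset (Fin n × Fin n))
    (hne : ∀ p ∈ S, p.1 ≠ p.2) (hcard : S.card = n - 1)
    (hconn : (gammaGraph S).Connected) :
    (∀ p ∈ S, ∀ q ∈ S, s(p.1, p.2) = s(q.1, q.2) → p = q) ∧
    (∀ p ∈ S, ¬ ((gammaGraph S).deleteEdges {s(p.1, p.2)}).Reachable p.1 p.2) := by
  have hadjS : ∀ p ∈ S, (gammaGraph S).Adj p.1 p.2 := by
    intro p hp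
    exact (SimpleGraph.fromRel_adj _ _ _).mpr ⟨hne p hp, Or.inl hp⟩
  have himg : (gammaGraph S).edgeSet = ↑(S.image (fun p => s(p.1, p.2))) := by
    ext e
    induction e using Sym2.ind with
    | _ a b =>
      simp only [SimpleGraph.mem_edgeSet, gammaGraph, SimpleGraph.fromRel_adj,
        Finset.coe_image, Set.mem_image, Finset.mem_coe]
      constructor
      · rintro ⟨hab, h | h⟩
        · exact ⟨(a, b), h, rfl⟩
        · exact ⟨(b, a), h, Sym2.eq_swap⟩
      · rintro ⟨p, hp, hpe⟩
        rcases Sym2.eq_iff.mp hpe with ⟨h1, h2⟩ | ⟨h1, h2⟩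
        · exact ⟨h1 ▸ h2 ▸ hne p hp, Or.inl (by rwa [← h1, ← h2, Prod.mk.eta])⟩
        · refine ⟨fun hab => hne p hp (by rw [h1, h2, hab]), Or.inr ?_⟩
          rwa [← h1, ← h2, Prod.mk.eta]
  have hlow : n - 1 ≤ (gammaGraph S).edgeSet.ncard := by
    have := my_connected_card_le ((gammaGraph S).edgeSet.ncard) (gammaGraph S) le_rfl hconn
    simp only [Fintype.card_fin] at this
    omega
  have hcardE : (gammaGraph S).edgeSet.ncard = (S.image (fun p => s(p.1, p.2))).card := by
    rw [himg, Set.ncard_coe_finset]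
  have hinj : Set.InjOn (fun p : Fin n × Fin n => s(p.1, p.2)) ↑S := by
    apply Finset.injOn_of_card_image_eq
    have h1 : (S.image (fun p => s(p.1, p.2))).card ≤ S.card := Finset.card_image_le
    omega
  have hinj' : ∀ p ∈ S, ∀ q ∈ S, s(p.1, p.2) = s(q.1, q.2) → p = q := fun p hp q hq h =>
    hinj hp hq h
  refine ⟨hinj', fun p hp hreach => ?_⟩
  have hconn' := my_deleteEdges_connected hconn hreach
  have hmem : s(p.1, p.2) ∈ (gammaGraph S).edgeSet := hadjS p hp
  have hcard' : ((gammaGraph S).deleteEdges {s(p.1, p.2)}).edgeSet.ncard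
      = (gammaGraph S).edgeSet.ncard - 1 := by
    rw [SimpleGraph.edgeSet_deleteEdges]
    exact Set.ncard_diff_singleton_of_mem hmem
  have h2 := my_connected_card_le _ ((gammaGraph S).deleteEdges {s(p.1, p.2)}) le_rfl hconn'
  simp only [Fintype.card_fin] at h2
  have hup : (gammaGraph S).edgeSet.ncard ≤ n - 1 := by
    have h1 : (S.image (fun p => s(p.1, p.2))).card ≤ S.card := Finset.card_image_le
    omega
  have hpos : 0 < (gammaGraph S).edgeSet.ncard := by
    rw [Set.ncard_pos (Set.toFinite _)]
    exact ⟨_, hmem⟩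
  omega

attribute [local instance 100] LieRing.ofAssociativeRing
attribute [local instance 100] LieAlgebra.ofAssociativeAlgebra

/-- **`D_S` is the principal element for a small Frobenius functional.**
Let `n ≥ 2` and let `S` be a set of `n - 1` ordered pairs `(i, j)`, `i ≠ j`,
whose undirected graph `Γ_S` is a tree.  Then `F_S (x) = F_S (⁅D_S, x⁆)` for all
`x ∈ sl n ℂ`.  Consequently, for every Lie subalgebra `f` of `sl n ℂ` containing
the Cartan subalgebra of traceless diagonal matrices on which `F_S` restricts to
a Frobenius functional, the principal element of `f` associated to `F_S` is
`D_S`. -/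
theorem DMat_is_principal_element
    (n : ℕ) (hn : 2 ≤ n) (S : Finset (Fin n × Fin n))
    (hne : ∀ p ∈ S, p.1 ≠ p.2)
    (hcard : S.card = n - 1)
    (hconn : (gammaGraph S).Connected) :
    (∀ x : Matrix (Fin n) (Fin n) ℂ, x.trace = 0 → FS S x = FS S ⁅DMat S, x⁆) ∧
    (∀ f : LieSubalgebra ℂ (Matrix (Fin n) (Fin n) ℂ),
      -- `f` is a subalgebra of `sl n ℂ`
      (∀ A ∈ f, Matrix.trace A = 0) →
      -- `f` contains the Cartan subalgebra of traceless diagonal matrices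
      (∀ A : Matrix (Fin n) (Fin n) ℂ, A.IsDiag → A.trace = 0 → A ∈ f) →
      -- the restriction of `F_S` to `f` is a Frobenius functional
      (∀ x ∈ f, (∀ y ∈ f, FS S ⁅x, y⁆ = 0) → x = 0) →
      -- then `D_S` is the principal element of `f` associated to `F_S`
      DMat S ∈ f ∧
        (∀ x ∈ f, FS S x = FS S ⁅DMat S, x⁆) ∧
        (∀ P ∈ f, (∀ x ∈ f, FS S x = FS S ⁅P, x⁆) → P = DMat S)) := by
  classical
  obtain ⟨hinj, hbridge⟩ := my_edge_facts hn S hne hcard hconn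
  have hn0 : (n : ℂ) ≠ 0 := Nat.cast_ne_zero.mpr (by omega)
  -- off-diagonal entries of epsMat vanish
  have hepsoff : ∀ k a b : Fin n, a ≠ b → epsMat n k a b = 0 := by
    intro k a b hab
    have h0 : Matrix.single k k (1 : ℂ) a b = 0 :=
      Matrix.single_apply_of_ne k k 1 a b (fun hh => hab (hh.1 ▸ hh.2 ▸ rfl))
    simp [epsMat, Matrix.sub_apply, Matrix.smul_apply, Matrix.one_apply_ne hab, h0]
  -- diagonal entries of epsMat
  have hepsd : ∀ k c : Fin n, epsMat n k c c = (if k = c then (1:ℂ) else 0) - (n : ℂ)⁻¹ := by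
    intro k c
    by_cases h : k = c
    · subst h
      simp [epsMat, Matrix.sub_apply, Matrix.smul_apply, Matrix.one_apply]
    · have h0 : Matrix.single k k (1 : ℂ) c c = 0 :=
        Matrix.single_apply_of_ne k k 1 c c (fun hh => h hh.1)
      simp [epsMat, Matrix.sub_apply, Matrix.smul_apply, Matrix.one_apply, h0, h]
  -- DMat is diagonal
  have hDoff : ∀ a b : Fin n, a ≠ b → DMat S a b = 0 := by
    intro a b hab
    simp only [DMat, dMat, Matrix.sum_apply]
    refine Finset.sum_eq_zero fun s _ => Finset.sum_eq_zero fun k _ => ?_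
    rw [apply_ite (fun M : Matrix (Fin n) (Fin n) ℂ => M a b)]
    simp [hepsoff k a b hab]
  -- diagonal entries of dMat
  have hdd : ∀ (s : Fin n × Fin n) (c : Fin n),
      dMat S s c c =
        (if ((gammaGraph S).deleteEdges {s(s.1, s.2)}).Reachable c s.1 then (1:ℂ) else 0)
          + ∑ k : Fin n,
            (if ((gammaGraph S).deleteEdges {s(s.1, s.2)}).Reachable k s.1
              then -(n : ℂ)⁻¹ else 0) := by
    intro s c
    simp only [dMat, Matrix.sum_apply]
    have hterm : ∀ k : Fin n,
        (if ((gammaGraph S).deleteEdges {s(s.1, s.2)}).Reachable k s.1 then epsMat n k else 0) c c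
        = (if k = c then
            (if ((gammaGraph S).deleteEdges {s(s.1, s.2)}).Reachable k s.1 then (1:ℂ) else 0)
            else 0)
          + (if ((gammaGraph S).deleteEdges {s(s.1, s.2)}).Reachable k s.1
              then -(n : ℂ)⁻¹ else 0) := by
      intro k
      by_cases h1 : ((gammaGraph S).deleteEdges {s(s.1, s.2)}).Reachable k s.1 <;>
      by_cases h2 : k = c <;>
      first
      | (simp [h1, h2, hepsd, sub_eq_add_neg,
          apply_ite (fun M : Matrix (Fin n) (Fin n) ℂ => M c c)];
         split_ifs <;> simp)
      | simp [h1, h2, hepsd, sub_eq_add_neg,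
          apply_ite (fun M : Matrix (Fin n) (Fin n) ℂ => M c c)]
    rw [Finset.sum_congr rfl fun k _ => hterm k, Finset.sum_add_distrib]
    congr 1
    rw [Finset.sum_ite_eq' Finset.univ c
      (fun k => if ((gammaGraph S).deleteEdges {s(s.1, s.2)}).Reachable k s.1 then (1:ℂ) else 0)]
    simp
  -- key: difference of diagonal entries along an edge is 1
  have hdiff : ∀ p ∈ S, DMat S p.1 p.1 - DMat S p.2 p.2 = 1 := by
    intro p hp
    simp only [DMat, Matrix.sum_apply]
    rw [← Finset.sum_sub_distrib]
    have hterm : ∀ s ∈ S,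
        dMat S s p.1 p.1 - dMat S s p.2 p.2 = if s = p then (1:ℂ) else 0 := by
      intro s hs
      rw [hdd s p.1, hdd s p.2, add_sub_add_right_eq_sub]
      by_cases hsp : s = p
      · subst hsp
        have h1 : ((gammaGraph S).deleteEdges {s(s.1, s.2)}).Reachable s.1 s.1 :=
          SimpleGraph.Reachable.refl _
        have h2 : ¬ ((gammaGraph S).deleteEdges {s(s.1, s.2)}).Reachable s.2 s.1 :=
          fun h => hbridge s hs h.symm
        simp [h1, h2]
      · have hEne : s(p.1, p.2) ≠ s(s.1, s.2) := fun h => hsp (hinj s hs p hp (h.symm) ▸ rfl)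
        have hadj : ((gammaGraph S).deleteEdges {s(s.1, s.2)}).Adj p.1 p.2 :=
          SimpleGraph.deleteEdges_adj.mpr
            ⟨(SimpleGraph.fromRel_adj _ _ _).mpr ⟨hne p hp, Or.inl hp⟩, by simpa using hEne⟩
        have hiff : ((gammaGraph S).deleteEdges {s(s.1, s.2)}).Reachable p.1 s.1 ↔
            ((gammaGraph S).deleteEdges {s(s.1, s.2)}).Reachable p.2 s.1 :=
          ⟨fun h => hadj.symm.reachable.trans h, fun h => hadj.reachable.trans h⟩
        by_cases h1 : ((gammaGraph S).deleteEdges {s(s.1, s.2)}).Reachable p.1 s.1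
        · have h2 := hiff.mp h1
          rw [if_pos h1, if_pos h2, if_neg hsp, sub_self]
        · have h2 : ¬ ((gammaGraph S).deleteEdges {s(s.1, s.2)}).Reachable p.2 s.1 :=
            fun h => h1 (hiff.mpr h)
          rw [if_neg h1, if_neg h2, if_neg hsp, sub_self]
    rw [Finset.sum_congr rfl hterm, Finset.sum_ite_eq' S p (fun _ => (1:ℂ))]
    simp [hp]
  -- bracket entries along edges
  have hbrk : ∀ (x : Matrix (Fin n) (Fin n) ℂ), ∀ p ∈ S,
      (⁅DMat S, x⁆ : Matrix (Fin n) (Fin n) ℂ) p.1 p.2 = x p.1 p.2 := by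
    intro x p hp
    rw [Ring.lie_def, Matrix.sub_apply, Matrix.mul_apply, Matrix.mul_apply]
    rw [Finset.sum_eq_single p.1 (fun c _ hc => by rw [hDoff p.1 c (Ne.symm hc), zero_mul])
      (fun h => absurd (Finset.mem_univ _) h)]
    rw [Finset.sum_eq_single p.2 (fun c _ hc => by rw [hDoff c p.2 hc, mul_zero])
      (fun h => absurd (Finset.mem_univ _) h)]
    have hD : DMat S p.1 p.1 = DMat S p.2 p.2 + 1 := by linear_combination hdiff p hp
    rw [hD]
    ring
  have part1 : ∀ x : Matrix (Fin n) (Fin n) ℂ, FS S x = FS S ⁅DMat S, x⁆ := by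
    intro x
    exact Finset.sum_congr rfl fun p hp => (hbrk x p hp).symm
  have htreps : ∀ k : Fin n, (epsMat n k).trace = 0 := by
    intro k
    rw [epsMat, Matrix.trace_sub, Matrix.trace_smul, Matrix.trace_single_eq_same,
      Matrix.trace_one]
    have h1 : ((n : ℂ)⁻¹ * n) = 1 := inv_mul_cancel₀ hn0
    simp [smul_eq_mul, Fintype.card_fin, h1]
  have htrD : (DMat S).trace = 0 := by
    rw [DMat, Matrix.trace_sum]
    refine Finset.sum_eq_zero fun s _ => ?_
    rw [dMat, Matrix.trace_sum]
    refine Finset.sum_eq_zero fun k _ => ?_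
    rw [apply_ite (fun M : Matrix (Fin n) (Fin n) ℂ => M.trace), htreps k, Matrix.trace_zero]
    simp
  have hdiagD : (DMat S).IsDiag := fun i j h => hDoff i j h
  refine ⟨fun x _ => part1 x, fun f ftr fcartan ffrob => ?_⟩
  have hDmem : DMat S ∈ f := fcartan (DMat S) hdiagD htrD
  refine ⟨hDmem, fun x _ => part1 x, ?_⟩
  intro P hP hprin
  have hzero : ∀ y ∈ f, FS S ⁅P - DMat S, y⁆ = 0 := by
    intro y hy
    have h1 : FS S ⁅P, y⁆ = FS S y := (hprin y hy).symm
    have h2 : FS S ⁅DMat S, y⁆ = FS S y := (part1 y).symm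
    have h3 : (⁅P - DMat S, y⁆ : Matrix (Fin n) (Fin n) ℂ) = ⁅P, y⁆ - ⁅DMat S, y⁆ :=
      sub_lie _ _ _
    have h4 : FS S (⁅P, y⁆ - ⁅DMat S, y⁆) = FS S ⁅P, y⁆ - FS S ⁅DMat S, y⁆ := by
      simp [FS, Matrix.sub_apply, Finset.sum_sub_distrib]
    rw [h3, h4, h1, h2, sub_self]
  have hz := ffrob _ (sub_mem hP hDmem) hzero
  exact sub_eq_zero.mp hz
end

section
/- Let n ≥ 2, let p be the first maximal parabolic subalgebra of sl_n(ℂ), consisting of all traceless n×n complex matrices (a_{ij}) with a_{i1} = 0 for all i > 1, and let F be the functional F(x) = Σ_{i=1}^{n−1} x_{i,i+1}. Let H = (1/2)·diag(n−1, n−3, …, 1−n), i.e. the diagonal matrix with k-th diagonal entry (n+1−2k)/2. Then H ∈ p and F(x) = F([H, x]) for all x ∈ sl_n(ℂ). Consequently, if the restriction of F to p is a Frobenius functional on p, then the principal element of p associated to F is H, which is half of the semisimple element of Kostant's principal three-dimensional subalgebra of sl_n(ℂ). -/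
/-- Membership in the first maximal parabolic subalgebra `p` of `sl n ℂ`:
traceless matrices whose first column vanishes below the `(1,1)` entry. -/
def InFirstParabolic {n : ℕ} (A : Matrix (Fin n) (Fin n) ℂ) : Prop :=
  A.trace = 0 ∧ ∀ i j : Fin n, (j : ℕ) = 0 → (i : ℕ) ≠ 0 → A i j = 0

/-- The functional `F (x) = Σ_{i = 1}^{n - 1} x_{i, i + 1}`, i.e. the sum of the
entries on the first superdiagonal. -/
noncomputable def Fpar {n : ℕ} (x : Matrix (Fin n) (Fin n) ℂ) : ℂ :=
  ∑ i : Fin n, if h : (i : ℕ) + 1 < n then x i ⟨(i : ℕ) + 1, h⟩ else 0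

/-- The matrix `H = (1/2) diag (n - 1, n - 3, …, 1 - n)`, half of the semisimple
element of Kostant's principal three-dimensional subalgebra of `sl n ℂ`. -/
noncomputable def Hpar (n : ℕ) : Matrix (Fin n) (Fin n) ℂ :=
  Matrix.diagonal fun k : Fin n => ((n : ℂ) - 1 - 2 * (k : ℕ)) / 2

lemma sumrange (n : ℕ) : (∑ k ∈ Finset.range n, (k : ℂ)) * 2 = n * (n - 1) := by
  induction n with
  | zero => simp
  | succ m ih =>
    rw [Finset.sum_range_succ]
    push_cast
    linear_combination ih

lemma Hpar_trace (n : ℕ) : (Hpar n).trace = 0 := by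
  simp only [Hpar, Matrix.trace_diagonal]
  rw [Fin.sum_univ_eq_sum_range (fun k => ((n:ℂ) - 1 - 2*(k:ℕ))/2)]
  have h := sumrange n
  have : ∑ i ∈ Finset.range n, ((n:ℂ) - 1 - 2 * i) / 2
      = ((n:ℂ)*(n-1) - 2 * ∑ k ∈ Finset.range n, (k:ℂ)) / 2 := by
    rw [← Finset.sum_div]
    congr 1
    simp only [Finset.sum_sub_distrib, Finset.sum_const, Finset.card_range, nsmul_eq_mul,
      ← Finset.mul_sum]
    ring
  rw [this, div_eq_zero_iff]; left; linear_combination -h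

lemma bracket_diag {n : ℕ} (d : Fin n → ℂ) (x : Matrix (Fin n) (Fin n) ℂ) (i j : Fin n) :
    ⁅Matrix.diagonal d, x⁆ i j = (d i - d j) * x i j := by
  simp only [Ring.lie_def, Matrix.sub_apply, Matrix.diagonal_mul, Matrix.mul_diagonal]
  ring

lemma Fpar_sub {n : ℕ} (a b : Matrix (Fin n) (Fin n) ℂ) :
    Fpar (a - b) = Fpar a - Fpar b := by
  unfold Fpar
  rw [← Finset.sum_sub_distrib]
  refine Finset.sum_congr rfl fun i _ => ?_
  by_cases h : (i : ℕ) + 1 < n <;> simp [h, Matrix.sub_apply]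

lemma Fpar_bracket_H {n : ℕ} (x : Matrix (Fin n) (Fin n) ℂ) :
    Fpar ⁅Hpar n, x⁆ = Fpar x := by
  unfold Fpar
  refine Finset.sum_congr rfl fun i _ => ?_
  by_cases h : (i : ℕ) + 1 < n
  · simp only [h, dif_pos, Hpar, bracket_diag]
    have : ((n : ℂ) - 1 - 2 * (i : ℕ)) / 2 - ((n : ℂ) - 1 - 2 * ((i : ℕ) + 1)) / 2 = 1 := by
      ring
    push_cast
    rw [this, one_mul]
  · simp [h]


/-- **The principal element of the first maximal parabolic subalgebra.**
Let `n ≥ 2`, let `p` be the first maximal parabolic subalgebra of `sl n ℂ`, let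
`F (x) = Σ_{i = 1}^{n - 1} x_{i, i + 1}`, and let
`H = (1/2) diag (n - 1, n - 3, …, 1 - n)`.  Then `H ∈ p` and `F (x) = F (⁅H, x⁆)`
for all `x ∈ sl n ℂ`.  Consequently, if the restriction of `F` to `p` is a
Frobenius functional, then the principal element of `p` associated to `F` is
`H`. -/
theorem first_parabolic_principal_element
    (n : ℕ) (hn : 2 ≤ n) :
    InFirstParabolic (Hpar n) ∧
    (∀ x : Matrix (Fin n) (Fin n) ℂ, x.trace = 0 → Fpar x = Fpar ⁅Hpar n, x⁆) ∧
    -- if the restriction of `F` to `p` is a Frobenius functional on `p`,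
    ((∀ x : Matrix (Fin n) (Fin n) ℂ, InFirstParabolic x →
        (∀ y : Matrix (Fin n) (Fin n) ℂ, InFirstParabolic y → Fpar ⁅x, y⁆ = 0) →
        x = 0) →
      -- then the principal element of `p` associated to `F` equals `H`
      ∀ P : Matrix (Fin n) (Fin n) ℂ, InFirstParabolic P →
        (∀ x : Matrix (Fin n) (Fin n) ℂ, InFirstParabolic x →
          Fpar x = Fpar ⁅P, x⁆) → P = Hpar n) := by
  have hHp : InFirstParabolic (Hpar n) := by
    refine ⟨Hpar_trace n, fun i j hj hi => ?_⟩
    have : i ≠ j := fun h => hi (h ▸ hj)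
    simp [Hpar, Matrix.diagonal_apply_ne _ this]
  refine ⟨hHp, fun x _ => (Fpar_bracket_H x).symm, fun hFrob P hP hPF => ?_⟩
  have key : P - Hpar n = 0 := by
    refine hFrob _ ⟨by simp [Matrix.trace_sub, hP.1, Hpar_trace], fun i j hj hi => by
      simp [Matrix.sub_apply, hP.2 i j hj hi, hHp.2 i j hj hi]⟩ fun y hy => ?_
    rw [show ⁅P - Hpar n, y⁆ = ⁅P, y⁆ - ⁅Hpar n, y⁆ by
      simp only [Ring.lie_def, sub_mul, mul_sub]; abel, Fpar_sub, ← hPF y hy, Fpar_bracket_H y, sub_self]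
  exact sub_eq_zero.mp key
end

section
/- A finite-dimensional complex simple Lie algebra is never Frobenius: if g is a nonzero finite-dimensional simple Lie algebra over ℂ, then for every linear functional F ∈ g* the skew-symmetric form B_F(x,y) = F([x,y]) is degenerate. -/
open LinearMap LieAlgebra

attribute [local instance 100] LieRing.ofAssociativeRing

/-- The trace of `ad z` vanishes for `z` in the derived ideal. -/
lemma trace_ad_eq_zero_of_mem_derived
    (g : Type*) [LieRing g] [LieAlgebra ℂ g] [Module.Finite ℂ g] [Module.Free ℂ g]
    (z : g) (hz : z ∈ (⁅(⊤ : LieIdeal ℂ g), (⊤ : LieIdeal ℂ g)⁆ : LieIdeal ℂ g)) :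
    LinearMap.trace ℂ g (ad ℂ g z) = 0 := by
  have hz' : z ∈ Submodule.span ℂ
      {m : g | ∃ (x : (⊤ : LieIdeal ℂ g)) (n : (⊤ : LieSubmodule ℂ g g)), ⁅(x : g), (n : g)⁆ = m} := by
    rw [← LieSubmodule.lieIdeal_oper_eq_linear_span]
    exact hz
  refine Submodule.span_induction ?_ ?_ ?_ ?_ hz'
  · rintro m ⟨x, n, rfl⟩
    rw [LieHom.map_lie]
    exact LinearMap.trace_lie (ad ℂ g (x : g)) (ad ℂ g (n : g))
  · simp
  · intro a b _ _ ha hb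
    rw [map_add, map_add, ha, hb, add_zero]
  · intro c a _ ha
    rw [map_smul, map_smul, ha, smul_zero]

/-- For a simple Lie algebra the derived ideal is everything. -/
lemma derived_eq_top
    (g : Type*) [LieRing g] [LieAlgebra ℂ g] [LieAlgebra.IsSimple ℂ g] :
    (⁅(⊤ : LieIdeal ℂ g), (⊤ : LieIdeal ℂ g)⁆ : LieIdeal ℂ g) = ⊤ := by
  rcases LieAlgebra.IsSimple.eq_bot_or_eq_top
      (⁅(⊤ : LieIdeal ℂ g), (⊤ : LieIdeal ℂ g)⁆ : LieIdeal ℂ g) with h | h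
  · exfalso
    apply LieAlgebra.IsSimple.non_abelian (R := ℂ) (L := g)
    constructor
    intro x y
    have hmem : ⁅x, y⁆ ∈ (⁅(⊤ : LieIdeal ℂ g), (⊤ : LieIdeal ℂ g)⁆ : LieIdeal ℂ g) :=
      LieSubmodule.lie_mem_lie (LieSubmodule.mem_top x) (LieSubmodule.mem_top y)
    rw [h] at hmem
    simpa using hmem
  · exact h

/-- **A simple Lie algebra is never Frobenius.**
If `g` is a nonzero finite-dimensional simple Lie algebra over `ℂ`, then for
every linear functional `F ∈ g*` the skew-symmetric form `B_F (x, y) = F ⁅x, y⁆`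
is degenerate. -/
theorem simple_is_not_frobenius
    (g : Type*) [LieRing g] [LieAlgebra ℂ g] [FiniteDimensional ℂ g]
    [Nontrivial g] [LieAlgebra.IsSimple ℂ g]
    (F : Module.Dual ℂ g) :
    ∃ x : g, x ≠ 0 ∧ ∀ y : g, F ⁅x, y⁆ = 0 := by
  by_contra hcon
  push_neg at hcon
  -- the bilinear form B x y = F ⁅x, y⁆
  set B : LinearMap.BilinForm ℂ g :=
    (LinearMap.llcomp ℂ g g ℂ F).comp (ad ℂ g).toLinearMap with hB
  have hBapp : ∀ x y : g, B x y = F ⁅x, y⁆ := fun x y => rfl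
  have hnd : B.Nondegenerate := .ofSeparatingLeft <| by
    intro x hx
    by_contra hx0
    obtain ⟨y, hy⟩ := hcon x hx0
    exact hy (hx y)
  set e := B.toDual hnd with he
  set z := e.symm F with hzdef
  have hz : ∀ y : g, B z y = F y := fun y =>
    LinearMap.BilinForm.apply_toDual_symm_apply (hB := hnd) (f := F) (v := y)
  set T : Module.End ℂ g := ad ℂ g z with hT
  set S : Module.End ℂ g :=
    e.symm.conj (Module.Dual.transpose (R := ℂ) T) with hS
  have hSapp : ∀ x y : g, B (S x) y = B x (T y) := by
    intro x y
    have : S x = e.symm ((Module.Dual.transpose (R := ℂ) T) (e x)) := rfl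
    rw [this, LinearMap.BilinForm.apply_toDual_symm_apply (hB := hnd)]
    rfl
  have key : T + S = LinearMap.id := by
    refine LinearMap.ext fun x => ?_
    have hx : ∀ y, B ((T + S) x - x) y = 0 := by
      intro y
      have h1 : B ((T + S) x) y = B (T x) y + B (S x) y := by
        simp
      rw [map_sub, LinearMap.sub_apply, h1, hSapp]
      rw [sub_eq_zero]
      show B (T x) y + B x (T y) = B x y
      rw [hBapp, hBapp, hBapp]
      have : ⁅z, ⁅x, y⁆⁆ = ⁅⁅z, x⁆, y⁆ + ⁅x, ⁅z, y⁆⁆ := leibniz_lie z x y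
      have h3 : F ⁅z, ⁅x, y⁆⁆ = F ⁅⁅z, x⁆, y⁆ + F ⁅x, ⁅z, y⁆⁆ := by rw [this, map_add]
      have h4 : B z ⁅x, y⁆ = F ⁅x, y⁆ := hz ⁅x, y⁆
      rw [hBapp] at h4
      simp only [hT, ad_apply]
      rw [← h3, h4]
  -- done with pointwise identity
    have := hnd.1 _ hx
    rwa [sub_eq_zero] at this
  have htrS : LinearMap.trace ℂ g S = LinearMap.trace ℂ g T := by
    rw [hS, LinearMap.trace_conj', LinearMap.trace_transpose']
  have htrT : LinearMap.trace ℂ g T = 0 := by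
    apply trace_ad_eq_zero_of_mem_derived
    rw [derived_eq_top]
    exact LieSubmodule.mem_top z
  have htr : ((Module.finrank ℂ g : ℂ)) = 0 := by
    have := congrArg (LinearMap.trace ℂ g) key
    rw [map_add, htrS, htrT, LinearMap.trace_id] at this
    simpa using this.symm
  have hpos : 0 < Module.finrank ℂ g := Module.finrank_pos
  rw [Nat.cast_eq_zero] at htr
  omega
end
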